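/- arXiv:2401.00228 — 8 statements merged into one kernel-verified Lean document; each statement's English description precedes it below -/
import Mathlib

section
/- For the time-coarsening intergrid operator 𝒵 (the stack of ν copies of I_n), the Galerkin coarse blocks satisfy 𝒵^T D 𝒵 = ν ψ_n − (ν−1) φ_n = I_n − (ν−1+θ) Δt A_n, and 𝒵^T C 𝒵 = −φ_n. Thus the Galerkin coarse time-grid system has the form of a one-step time integration scheme with the coarse time step ΔT = νΔt. -/
/-!
Since every block of `𝒵` is the identity, `𝒵ᵀ M 𝒵` is the sum of all `n × n` blocks of `M`.
The blocks of `D` are `ν` copies of `ψ` on the diagonal and `ν - 1` copies of `-φ` on the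
subdiagonal, and `C` has the single block `-φ`. Expanding `ψ` and `φ` then gives
`ν ψ - (ν - 1) φ = I - (ν - 1 + θ) Δt A`.
-/

open Matrix

theorem transpose_mul_mul_apply_of_stack_one {ι m R : Type*} [Fintype ι] [Fintype m]
    [DecidableEq m] [NonAssocSemiring R] {Z : Matrix (ι × m) m R}
    (hZ : ∀ k i j, Z (k, i) j = (1 : Matrix m m R) i j) (M : Matrix (ι × m) (ι × m) R)
    (i j : m) : (Zᵀ * M * Z) i j = ∑ k, ∑ l, M (k, i) (l, j) := by
  simp only [mul_apply, transpose_apply, Fintype.sum_prod_type, hZ, one_apply, ite_mul,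
    one_mul, zero_mul, mul_ite, mul_one, mul_zero, Finset.sum_ite_eq', Finset.mem_univ, if_true]
  rw [Finset.sum_comm]

theorem Fin.sum_sum_ite_val_add_one_eq {R : Type*} [CommRing R] {ν : ℕ} (hν : 1 ≤ ν) (c : R) :
    ∑ k : Fin ν, ∑ l : Fin ν, (if (l : ℕ) + 1 = k then c else 0) = ((ν : R) - 1) * c := by
  obtain ⟨m, rfl⟩ := Nat.exists_eq_add_of_le' hν
  have hsucc (k : Fin m) :
      ∑ l : Fin (m + 1), (if (l : ℕ) + 1 = k.succ then c else 0) = c := by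
    rw [Finset.sum_eq_single k.castSucc] <;> simp +contextual [Fin.ext_iff]
  rw [Fin.sum_univ_succ]
  simp only [hsucc]
  simp

theorem Fin.sum_sum_bidiagonal {R : Type*} [CommRing R] {ν : ℕ} (hν : 1 ≤ ν) (p q : R) :
    ∑ k : Fin ν, ∑ l : Fin ν,
      (if k = l then p else if (l : ℕ) + 1 = k then q else 0) = ν * p + ((ν : R) - 1) * q := by
  have hsplit (k l : Fin ν) : (if k = l then p else if (l : ℕ) + 1 = k then q else 0) =
      (if k = l then p else 0) + (if (l : ℕ) + 1 = k then q else 0) := by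
    by_cases h : k = l
    · subst h; simp
    · simp [h]
  simp only [hsplit, Finset.sum_add_distrib, Fin.sum_sum_ite_val_add_one_eq hν]
  simp

theorem Fin.sum_sum_ite_val_eq_and {R : Type*} [AddCommMonoid R] {ν a b : ℕ} (ha : a < ν)
    (hb : b < ν) (x : R) :
    ∑ k : Fin ν, ∑ l : Fin ν, (if (k : ℕ) = a ∧ (l : ℕ) = b then x else 0) = x := by
  rw [Finset.sum_eq_single ⟨a, ha⟩, Finset.sum_eq_single ⟨b, hb⟩] <;> simp_all [Fin.ext_iff]

theorem stmt_5_general (n ν : ℕ) (hν : 1 ≤ ν)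
    (A : Matrix (Fin n) (Fin n) ℝ) (Δt θ : ℝ)
    (ψ φ : Matrix (Fin n) (Fin n) ℝ)
    (hψ : ψ = 1 - (θ * Δt) • A) (hφ : φ = 1 + ((1 - θ) * Δt) • A)
    (D C : Matrix (Fin ν × Fin n) (Fin ν × Fin n) ℝ)
    (hD : ∀ (k l : Fin ν) (i j : Fin n),
      D (k, i) (l, j) =
        if k = l then ψ i j else if (l:ℕ) + 1 = (k:ℕ) then -φ i j else 0)
    (hC : ∀ (k l : Fin ν) (i j : Fin n),
      C (k, i) (l, j) = if (k:ℕ) = 0 ∧ (l:ℕ) = ν - 1 then -φ i j else 0)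
    (𝒵 : Matrix (Fin ν × Fin n) (Fin n) ℝ)
    (h𝒵 : ∀ (k : Fin ν) (i j : Fin n), 𝒵 (k, i) j = if i = j then 1 else 0) :
    𝒵ᵀ * D * 𝒵 = (ν : ℝ) • ψ - ((ν : ℝ) - 1) • φ ∧
    𝒵ᵀ * D * 𝒵 = 1 - (((ν : ℝ) - 1 + θ) * Δt) • A ∧
    𝒵ᵀ * C * 𝒵 = -φ := by
  have hZ : ∀ k i j, 𝒵 (k, i) j = (1 : Matrix (Fin n) (Fin n) ℝ) i j := h𝒵
  have hDZ : 𝒵ᵀ * D * 𝒵 = (ν : ℝ) • ψ - ((ν : ℝ) - 1) • φ := by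
    ext i j
    rw [transpose_mul_mul_apply_of_stack_one hZ]
    simp only [hD, Fin.sum_sum_bidiagonal hν, Matrix.sub_apply, Matrix.smul_apply, smul_eq_mul]
    ring
  refine ⟨hDZ, ?_, ?_⟩
  · rw [hDZ, hψ, hφ]
    module
  · ext i j
    rw [transpose_mul_mul_apply_of_stack_one hZ]
    simp only [hC, Fin.sum_sum_ite_val_eq_and (Nat.zero_lt_of_lt hν) (Nat.sub_lt hν one_pos),
      Matrix.neg_apply]

/-- Time-coarsening Galerkin blocks: 𝒵ᵀ D 𝒵 = ν ψ − (ν−1) φ = I − (ν−1+θ) Δt A,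
    and 𝒵ᵀ C 𝒵 = −φ. -/
theorem stmt_5 (n ν : ℕ) (hn : 1 ≤ n) (hν : 1 ≤ ν)
    (A : Matrix (Fin n) (Fin n) ℝ) (Δt θ : ℝ) (hΔt : 0 < Δt) (hθ : θ ∈ Set.Icc (0:ℝ) 1)
    (ψ φ : Matrix (Fin n) (Fin n) ℝ)
    (hψ : ψ = 1 - (θ * Δt) • A) (hφ : φ = 1 + ((1 - θ) * Δt) • A)
    (D C : Matrix (Fin ν × Fin n) (Fin ν × Fin n) ℝ)
    (hD : ∀ (k l : Fin ν) (i j : Fin n),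
      D (k, i) (l, j) =
        if k = l then ψ i j else if (l:ℕ) + 1 = (k:ℕ) then -φ i j else 0)
    (hC : ∀ (k l : Fin ν) (i j : Fin n),
      C (k, i) (l, j) = if (k:ℕ) = 0 ∧ (l:ℕ) = ν - 1 then -φ i j else 0)
    (𝒵 : Matrix (Fin ν × Fin n) (Fin n) ℝ)
    (h𝒵 : ∀ (k : Fin ν) (i j : Fin n), 𝒵 (k, i) j = if i = j then 1 else 0) :
    𝒵ᵀ * D * 𝒵 = (ν : ℝ) • ψ - ((ν : ℝ) - 1) • φ ∧
    𝒵ᵀ * D * 𝒵 = 1 - (((ν : ℝ) - 1 + θ) * Δt) • A ∧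
    𝒵ᵀ * C * 𝒵 = -φ :=
  stmt_5_general n ν hν A Δt θ ψ φ hψ hφ D C hD hC 𝒵 h𝒵
end

section
/- For the time-space coarsening intergrid operators 𝒵 (the stack of ν copies of Z) and 𝒴 (the stack of ν copies of Y), the Galerkin coarse blocks satisfy 𝒴^T D 𝒵 = Y^T (ν ψ_n − (ν−1) φ_n) Z = Y^T Z − (ν−1+θ) Δt Y^T A_n Z, and 𝒴^T C 𝒵 = −Y^T φ_n Z = −(Y^T Z + (1−θ) Δt Y^T A_n Z). -/
open Matrix

/-- Time-space coarsening Galerkin blocks: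
    𝒴ᵀ D 𝒵 = Yᵀ (ν ψ − (ν−1) φ) Z = Yᵀ Z − (ν−1+θ) Δt Yᵀ A Z,
    and 𝒴ᵀ C 𝒵 = −Yᵀ φ Z = −(Yᵀ Z + (1−θ) Δt Yᵀ A Z). -/
theorem stmt_6 (n m ν : ℕ) (hn : 1 ≤ n) (hν : 1 ≤ ν)
    (A : Matrix (Fin n) (Fin n) ℝ) (Δt θ : ℝ) (hΔt : 0 < Δt) (hθ : θ ∈ Set.Icc (0:ℝ) 1)
    (ψ φ : Matrix (Fin n) (Fin n) ℝ)
    (hψ : ψ = 1 - (θ * Δt) • A) (hφ : φ = 1 + ((1 - θ) * Δt) • A)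
    (D C : Matrix (Fin ν × Fin n) (Fin ν × Fin n) ℝ)
    (hD : ∀ (k l : Fin ν) (i j : Fin n),
      D (k, i) (l, j) =
        if k = l then ψ i j else if (l:ℕ) + 1 = (k:ℕ) then -φ i j else 0)
    (hC : ∀ (k l : Fin ν) (i j : Fin n),
      C (k, i) (l, j) = if (k:ℕ) = 0 ∧ (l:ℕ) = ν - 1 then -φ i j else 0)
    (Z Y : Matrix (Fin n) (Fin m) ℝ)
    (𝒵 𝒴 : Matrix (Fin ν × Fin n) (Fin m) ℝ)
    (h𝒵 : ∀ (k : Fin ν) (i : Fin n) (j : Fin m), 𝒵 (k, i) j = Z i j)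
    (h𝒴 : ∀ (k : Fin ν) (i : Fin n) (j : Fin m), 𝒴 (k, i) j = Y i j) :
    𝒴ᵀ * D * 𝒵 = Yᵀ * ((ν : ℝ) • ψ - ((ν : ℝ) - 1) • φ) * Z ∧
    𝒴ᵀ * D * 𝒵 = Yᵀ * Z - (((ν : ℝ) - 1 + θ) * Δt) • (Yᵀ * A * Z) ∧
    𝒴ᵀ * C * 𝒵 = -(Yᵀ * φ * Z) ∧
    𝒴ᵀ * C * 𝒵 = -(Yᵀ * Z + ((1 - θ) * Δt) • (Yᵀ * A * Z)) := by
  have sumD : ∀ i j : Fin n, ∑ k : Fin ν, ∑ l : Fin ν, D (k, i) (l, j)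
      = (ν : ℝ) * ψ i j - ((ν : ℝ) - 1) * φ i j := by
    intro i j
    have hin : ∀ k : Fin ν, ∑ l : Fin ν, D (k, i) (l, j)
        = ψ i j + (if (k : ℕ) = 0 then 0 else -φ i j) := by
      intro k
      have split : ∀ l : Fin ν, D (k, i) (l, j)
          = (if k = l then ψ i j else 0) + (if (l:ℕ)+1 = (k:ℕ) then -φ i j else 0) := by
        intro l
        rw [hD]
        split_ifs with h1 h2
        · subst h1; omega
        · simp
        · simp
        · simp
      rw [Finset.sum_congr rfl (fun l _ => split l), Finset.sum_add_distrib,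
        Finset.sum_ite_eq Finset.univ k (fun _ => ψ i j), if_pos (Finset.mem_univ k)]
      congr 1
      rcases Nat.eq_zero_or_pos k.1 with h | h
      · rw [if_pos h]
        apply Finset.sum_eq_zero
        intro l _
        rw [if_neg (by omega)]
      · rw [if_neg (by omega)]
        rw [Finset.sum_eq_single (⟨k.1 - 1, by omega⟩ : Fin ν)]
        · rw [if_pos (by simp; omega)]
        · intro l _ hne
          rw [if_neg]
          intro h'
          exact hne (Fin.ext (by simp; omega))
        · intro h'
          exact absurd (Finset.mem_univ _) h'
    rw [Finset.sum_congr rfl (fun k _ => hin k), Finset.sum_add_distrib,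
      Finset.sum_const, Finset.card_univ, Fintype.card_fin, nsmul_eq_mul]
    have : ∑ k : Fin ν, (if (k : ℕ) = 0 then (0:ℝ) else -φ i j)
        = ((ν : ℝ) - 1) * (-φ i j) := by
      have : ∀ k : Fin ν, (if (k : ℕ) = 0 then (0:ℝ) else -φ i j)
          = -φ i j - (if (k : ℕ) = 0 then -φ i j else 0) := by
        intro k; split_ifs <;> ring
      rw [Finset.sum_congr rfl (fun k _ => this k), Finset.sum_sub_distrib,
        Finset.sum_const, Finset.card_univ, Fintype.card_fin, nsmul_eq_mul]
      have h0 : ∑ k : Fin ν, (if (k : ℕ) = 0 then -φ i j else (0:ℝ)) = -φ i j := by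
        rw [Finset.sum_eq_single (⟨0, hν⟩ : Fin ν)]
        · rw [if_pos rfl]
        · intro l _ hne
          rw [if_neg]
          intro h'
          exact hne (Fin.ext (by simp; omega))
        · intro h'
          exact absurd (Finset.mem_univ _) h'
      rw [h0]; ring
    rw [this]; ring
  have sumC : ∀ i j : Fin n, ∑ k : Fin ν, ∑ l : Fin ν, C (k, i) (l, j) = -φ i j := by
    intro i j
    have hin : ∀ k : Fin ν, ∑ l : Fin ν, C (k, i) (l, j)
        = (if (k : ℕ) = 0 then -φ i j else 0) := by
      intro k
      rcases Nat.eq_zero_or_pos k.1 with h | h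
      · rw [if_pos h]
        rw [Finset.sum_eq_single (⟨ν - 1, by omega⟩ : Fin ν)]
        · rw [hC, if_pos ⟨h, rfl⟩]
        · intro l _ hne
          rw [hC, if_neg]
          rintro ⟨-, h2⟩
          exact hne (Fin.ext (by simp; omega))
        · intro h'
          exact absurd (Finset.mem_univ _) h'
      · rw [if_neg (by omega)]
        apply Finset.sum_eq_zero
        intro l _
        rw [hC, if_neg (by omega)]
    rw [Finset.sum_congr rfl (fun k _ => hin k)]
    rw [Finset.sum_eq_single (⟨0, hν⟩ : Fin ν)]
    · rw [if_pos rfl]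
    · intro l _ hne
      rw [if_neg]
      intro h'
      exact hne (Fin.ext (by simp; omega))
    · intro h'
      exact absurd (Finset.mem_univ _) h'
  have keyD : 𝒴ᵀ * D * 𝒵 = Yᵀ * ((ν : ℝ) • ψ - ((ν : ℝ) - 1) • φ) * Z := by
    ext p q
    simp only [Matrix.mul_apply, Matrix.transpose_apply, Fintype.sum_prod_type,
      h𝒴, h𝒵, Matrix.sub_apply, Matrix.smul_apply, smul_eq_mul]
    rw [Finset.sum_comm]
    apply Finset.sum_congr rfl
    intro j _
    rw [← Finset.sum_mul]
    congr 1
    rw [Finset.sum_comm,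
      Finset.sum_congr rfl (fun k _ => (Finset.sum_comm :
        ∑ l : Fin ν, ∑ i : Fin n, Y i p * D (k, i) (l, j)
          = ∑ i : Fin n, ∑ l : Fin ν, Y i p * D (k, i) (l, j))),
      Finset.sum_comm]
    apply Finset.sum_congr rfl
    intro i _
    simp only [← Finset.mul_sum]
    rw [sumD]
  have keyC : 𝒴ᵀ * C * 𝒵 = -(Yᵀ * φ * Z) := by
    ext p q
    simp only [Matrix.mul_apply, Matrix.transpose_apply, Fintype.sum_prod_type,
      h𝒴, h𝒵, Matrix.neg_apply]
    rw [Finset.sum_comm]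
    rw [show -∑ j : Fin n, (∑ i : Fin n, Y i p * φ i j) * Z j q
        = ∑ j : Fin n, (∑ i : Fin n, Y i p * (-φ i j)) * Z j q by
      rw [← Finset.sum_neg_distrib]
      apply Finset.sum_congr rfl
      intro j _
      rw [← neg_mul, ← Finset.sum_neg_distrib]
      simp [mul_neg]]
    apply Finset.sum_congr rfl
    intro j _
    rw [← Finset.sum_mul]
    congr 1
    rw [Finset.sum_comm,
      Finset.sum_congr rfl (fun k _ => (Finset.sum_comm :
        ∑ l : Fin ν, ∑ i : Fin n, Y i p * C (k, i) (l, j)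
          = ∑ i : Fin n, ∑ l : Fin ν, Y i p * C (k, i) (l, j))),
      Finset.sum_comm]
    apply Finset.sum_congr rfl
    intro i _
    simp only [← Finset.mul_sum]
    rw [sumC]
  have hM : (ν : ℝ) • ψ - ((ν : ℝ) - 1) • φ
      = 1 - (((ν : ℝ) - 1 + θ) * Δt) • A := by
    subst hψ hφ; module
  refine ⟨keyD, ?_, keyC, ?_⟩
  · rw [keyD, hM, Matrix.mul_sub, Matrix.mul_one, Matrix.sub_mul,
      Matrix.mul_smul, Matrix.smul_mul]
  · rw [keyC, hφ, Matrix.mul_add, Matrix.mul_one, Matrix.add_mul,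
      Matrix.mul_smul, Matrix.smul_mul]
end

section
/- For the 1-dimensional Dirichlet Laplacian matrix on 2m gridpoints with mesh size Δx and the agglomeration matrices Z and Y obtained by grouping gridpoints into consecutive pairs, the Galerkin coarse matrix satisfies Y^T (Δx^{−2} L_{2m}) Z = (√2 Δx)^{−2} L_m; that is, the agglomerated Galerkin matrix equals the 1-dimensional Dirichlet Laplacian matrix on m gridpoints with the coarse mesh size ΔX = √2 Δx. -/
set_option maxHeartbeats 2000000


open Matrix

lemma sum_pair_div_aux (m : ℕ) (j : Fin m) (f : Fin (2*m) → ℝ) (c : ℝ) :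
    ∑ i : Fin (2*m), (if (i:ℕ) / 2 = (j:ℕ) then c else 0) * f i
      = c * f ⟨2*(j:ℕ), by have := j.2; omega⟩ + c * f ⟨2*(j:ℕ)+1, by have := j.2; omega⟩ := by
  have h : ∀ i : Fin (2*m), (if (i:ℕ) / 2 = (j:ℕ) then c else 0) * f i
      = if (i:ℕ) / 2 = (j:ℕ) then c * f i else 0 := by
    intro i; split <;> simp
  rw [Finset.sum_congr rfl (fun i _ => h i), ← Finset.sum_filter]
  have hfil : Finset.univ.filter (fun i : Fin (2*m) => (i:ℕ) / 2 = (j:ℕ))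
      = {⟨2*(j:ℕ), by have := j.2; omega⟩, ⟨2*(j:ℕ)+1, by have := j.2; omega⟩} := by
    ext i
    simp only [Finset.mem_filter, Finset.mem_univ, true_and, Finset.mem_insert,
      Finset.mem_singleton, Fin.ext_iff]
    omega
  rw [hfil, Finset.sum_pair (by simp [Fin.ext_iff])]

/-- Agglomerating consecutive pairs of points of the 1D Dirichlet Laplacian with mesh
    size Δx yields the 1D Dirichlet Laplacian with coarse mesh size ΔX = √2 Δx:
    Yᵀ (Δx⁻² L_{2m}) Z = ((√2 Δx)²)⁻¹ L_m. -/
theorem stmt_8 (m : ℕ) (hm : 1 ≤ m) (Δx : ℝ) (hΔx : 0 < Δx)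
    (L2m : Matrix (Fin (2*m)) (Fin (2*m)) ℝ)
    (hL2m : ∀ i j, L2m i j =
      if i = j then -2 else if (i:ℕ) + 1 = (j:ℕ) ∨ (j:ℕ) + 1 = (i:ℕ) then 1 else 0)
    (Lm : Matrix (Fin m) (Fin m) ℝ)
    (hLm : ∀ i j, Lm i j =
      if i = j then -2 else if (i:ℕ) + 1 = (j:ℕ) ∨ (j:ℕ) + 1 = (i:ℕ) then 1 else 0)
    (Z Y : Matrix (Fin (2*m)) (Fin m) ℝ)
    (hZ : ∀ i j, Z i j = if (i:ℕ) / 2 = (j:ℕ) then 1 else 0)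
    (hY : ∀ i j, Y i j = if (i:ℕ) / 2 = (j:ℕ) then 1/2 else 0) :
    Yᵀ * ((Δx ^ 2)⁻¹ • L2m) * Z = ((Real.sqrt 2 * Δx) ^ 2)⁻¹ • Lm := by
  have hcore : Yᵀ * L2m * Z = (1/2 : ℝ) • Lm := by
    ext j k
    have hin : ∀ i' : Fin (2*m), (Yᵀ * L2m) j i'
        = (1/2) * L2m ⟨2*(j:ℕ), by have := j.2; omega⟩ i'
          + (1/2) * L2m ⟨2*(j:ℕ)+1, by have := j.2; omega⟩ i' := by
      intro i'
      rw [Matrix.mul_apply]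
      simp only [Matrix.transpose_apply, hY]
      exact sum_pair_div_aux m j (fun i => L2m i i') (1/2)
    rw [Matrix.mul_apply]
    simp only [hin, hZ]
    have := sum_pair_div_aux m k
      (fun i' => (1/2) * L2m ⟨2*(j:ℕ), by have := j.2; omega⟩ i'
          + (1/2) * L2m ⟨2*(j:ℕ)+1, by have := j.2; omega⟩ i') 1
    rw [Finset.sum_congr rfl (fun i' _ => by rw [mul_comm]), this]
    simp only [hL2m, hLm, Fin.ext_iff, Matrix.smul_apply, smul_eq_mul]
    split_ifs <;> first | omega | norm_num
  calc Yᵀ * ((Δx ^ 2)⁻¹ • L2m) * Z = (Δx ^ 2)⁻¹ • (Yᵀ * L2m * Z) := by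
        rw [Matrix.mul_smul, Matrix.smul_mul]
    _ = ((Real.sqrt 2 * Δx) ^ 2)⁻¹ • Lm := by
        rw [hcore, smul_smul]
        congr 1
        rw [mul_pow, Real.sq_sqrt (by norm_num)]
        field_simp
end

section
/- Suppose each coarse diagonal block A^H_{k,k} = Y_k^* A_{k,k} Z_k is invertible, so that A_H = 𝒴^* A 𝒵 is invertible and Q is well defined. Then the two-level matrix A Q is block lower triangular, and its (k,k) diagonal block equals A_{k,k} Q_k for k = 0,…,n_T. -/
open Matrix

section Aux

variable {K : ℕ}

/-- Block lower triangular predicate for matrices indexed by `Fin K × _`. -/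
def BLT {α β : Type*} (M : Matrix (Fin K × α) (Fin K × β) ℂ) : Prop :=
  ∀ (k l : Fin K) (i : α) (j : β), (k : ℕ) < (l : ℕ) → M (k, i) (l, j) = 0

/-- The `k`-th diagonal block. -/
def dblk {α β : Type*} (M : Matrix (Fin K × α) (Fin K × β) ℂ) (k : Fin K) :
    Matrix α β ℂ := fun i j => M (k, i) (k, j)

lemma BLT.mul {α β γ : Type*} [Fintype β] {M : Matrix (Fin K × α) (Fin K × β) ℂ}
    {N : Matrix (Fin K × β) (Fin K × γ) ℂ} (hM : BLT M) (hN : BLT N) : BLT (M * N) := by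
  intro k l i j hkl
  show ∑ p : Fin K × β, M (k, i) p * N p (l, j) = 0
  rw [Fintype.sum_prod_type]
  refine Finset.sum_eq_zero fun p _ => Finset.sum_eq_zero fun q _ => ?_
  rcases lt_or_ge (k : ℕ) (p : ℕ) with h | h
  · rw [hM k p i q h, zero_mul]
  · rw [hN p l q j (lt_of_le_of_lt h hkl), mul_zero]

lemma dblk_mul {α β γ : Type*} [Fintype β] {M : Matrix (Fin K × α) (Fin K × β) ℂ}
    {N : Matrix (Fin K × β) (Fin K × γ) ℂ} (hM : BLT M) (hN : BLT N) (k : Fin K) :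
    dblk (M * N) k = dblk M k * dblk N k := by
  ext i j
  show ∑ p : Fin K × β, M (k, i) p * N p (k, j) = _
  rw [Fintype.sum_prod_type]
  rw [Finset.sum_eq_single_of_mem k (Finset.mem_univ k)]
  · rfl
  · intro p _ hp
    refine Finset.sum_eq_zero fun q _ => ?_
    rcases lt_or_gt_of_ne (fun h : (k : ℕ) = (p : ℕ) => hp (Fin.ext h.symm)) with h | h
    · rw [hM k p i q h, zero_mul]
    · rw [hN p k q j h, mul_zero]

lemma dblk_one {α : Type*} [DecidableEq α] (k : Fin K) :
    dblk (1 : Matrix (Fin K × α) (Fin K × α) ℂ) k = 1 := by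
  ext i j
  show (1 : Matrix (Fin K × α) (Fin K × α) ℂ) (k, i) (k, j) = _
  by_cases h : i = j <;> simp [Matrix.one_apply, Prod.ext_iff, h]

end Aux

/-- If each coarse diagonal block is invertible then A_H = 𝒴ᴴ A 𝒵 is invertible, the
    two-level matrix A Q is block lower triangular, and its (k,k) diagonal block
    equals A_{k,k} Q_k. -/
theorem stmt_10 (nT n m : ℕ)
    (Ad As : Fin (nT+1) → Matrix (Fin n) (Fin n) ℂ)
    (A : Matrix (Fin (nT+1) × Fin n) (Fin (nT+1) × Fin n) ℂ)
    (hA : ∀ (k l : Fin (nT+1)) (i j : Fin n),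
      A (k, i) (l, j) =
        if k = l then Ad k i j
        else if (l:ℕ) + 1 = (k:ℕ) then As k i j else 0)
    (Y Z : Fin (nT+1) → Matrix (Fin n) (Fin m) ℂ)
    (𝒴 𝒵 : Matrix (Fin (nT+1) × Fin n) (Fin (nT+1) × Fin m) ℂ)
    (h𝒴 : ∀ (k l : Fin (nT+1)) (i : Fin n) (j : Fin m),
      𝒴 (k, i) (l, j) = if k = l then Y k i j else 0)
    (h𝒵 : ∀ (k l : Fin (nT+1)) (i : Fin n) (j : Fin m),
      𝒵 (k, i) (l, j) = if k = l then Z k i j else 0)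
    (AHd : Fin (nT+1) → Matrix (Fin m) (Fin m) ℂ)
    (hAHd : ∀ k, AHd k = (Y k)ᴴ * Ad k * Z k)
    (hinv : ∀ k, IsUnit (AHd k))
    (μ : ℂ)
    (AH : Matrix (Fin (nT+1) × Fin m) (Fin (nT+1) × Fin m) ℂ)
    (hAH : AH = 𝒴ᴴ * A * 𝒵)
    (Q : Matrix (Fin (nT+1) × Fin n) (Fin (nT+1) × Fin n) ℂ)
    (hQ : Q = 1 - 𝒵 * AH⁻¹ * 𝒴ᴴ * A + μ • (𝒵 * AH⁻¹ * 𝒴ᴴ))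
    (Qk : Fin (nT+1) → Matrix (Fin n) (Fin n) ℂ)
    (hQk : ∀ k, Qk k =
      1 - Z k * (AHd k)⁻¹ * (Y k)ᴴ * Ad k + μ • (Z k * (AHd k)⁻¹ * (Y k)ᴴ)) :
    IsUnit AH ∧
    (∀ (k l : Fin (nT+1)), (k:ℕ) < (l:ℕ) → ∀ (i j : Fin n), (A * Q) (k, i) (l, j) = 0) ∧
    (∀ (k : Fin (nT+1)) (i j : Fin n), (A * Q) (k, i) (k, j) = (Ad k * Qk k) i j) := by
  -- basic BLT facts
  have hAblt : BLT A := by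
    intro k l i j hkl
    rw [hA]
    rw [if_neg (fun h => absurd (congrArg (Fin.val) h) (Nat.ne_of_lt hkl)),
      if_neg (by omega)]
  have hdA : ∀ k, dblk A k = Ad k := by
    intro k; ext i j; show A (k, i) (k, j) = _; rw [hA, if_pos rfl]
  have h𝒵blt : BLT 𝒵 := by
    intro k l i j hkl
    rw [h𝒵, if_neg (fun h => absurd (congrArg (Fin.val) h) (Nat.ne_of_lt hkl))]
  have hd𝒵 : ∀ k, dblk 𝒵 k = Z k := by
    intro k; ext i j; show 𝒵 (k, i) (k, j) = _; rw [h𝒵, if_pos rfl]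
  have h𝒴Hblt : BLT 𝒴ᴴ := by
    intro k l i j hkl
    show star (𝒴 (l, j) (k, i)) = 0
    rw [h𝒴, if_neg (fun h => absurd (congrArg (Fin.val) h) (Nat.ne_of_lt hkl).symm),
      star_zero]
  have hd𝒴H : ∀ k, dblk 𝒴ᴴ k = (Y k)ᴴ := by
    intro k; ext i j
    show star (𝒴 (k, j) (k, i)) = _
    rw [h𝒴, if_pos rfl]; rfl
  have hAHblt : BLT AH := by rw [hAH]; exact (h𝒴Hblt.mul hAblt).mul h𝒵blt
  have hdAH : ∀ k, dblk AH k = AHd k := by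
    intro k
    rw [hAH, dblk_mul (h𝒴Hblt.mul hAblt) h𝒵blt, dblk_mul h𝒴Hblt hAblt, hd𝒴H, hdA,
      hd𝒵, hAHd]
  -- block triangularity in mathlib's sense
  have hbt : AH.BlockTriangular (fun p => OrderDual.toDual p.1) := by
    intro p q h
    exact hAHblt p.1 q.1 p.2 q.2 (Fin.lt_iff_val_lt_val.mp h)
  -- invertibility
  have hdet : ∀ k, (AHd k).det ≠ 0 := fun k =>
    IsUnit.ne_zero ((Matrix.isUnit_iff_isUnit_det _).mp (hinv k))
  have hAHunit : IsUnit AH := by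
    rw [Matrix.isUnit_iff_isUnit_det, hbt.det, isUnit_iff_ne_zero]
    refine Finset.prod_ne_zero_iff.mpr fun a _ => ?_
    set k := OrderDual.ofDual a with hk
    have : (AH.toSquareBlock (fun p => OrderDual.toDual p.1) a).det = (AHd k).det := by
      let e : Fin m ≃ {p : Fin (nT+1) × Fin m // OrderDual.toDual p.1 = a} :=
        { toFun := fun j => ⟨(k, j), rfl⟩
          invFun := fun p => p.1.2
          left_inv := fun j => rfl
          right_inv := fun p => Subtype.ext (Prod.ext p.2.symm rfl) }
      rw [← Matrix.det_submatrix_equiv_self e (AH.toSquareBlock _ a)]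
      congr 1
      ext i j
      have h : AH (k, i) (k, j) = AHd k i j := by rw [← hdAH k]; rfl
      change AH (k, i) (k, j) = AHd k i j
      exact h
    rw [this]
    exact hdet k
  have hdetAH : IsUnit AH.det := (Matrix.isUnit_iff_isUnit_det _).mp hAHunit
  -- inverse is BLT with diagonal blocks (AHd k)⁻¹
  have : Invertible AH := hAHunit.invertible
  have hAHinvblt : BLT AH⁻¹ := by
    intro k l i j hkl
    exact Matrix.blockTriangular_inv_of_blockTriangular hbt
      (show (OrderDual.toDual ((l, j) : Fin (nT+1) × Fin m).1) <
        OrderDual.toDual ((k, i) : Fin (nT+1) × Fin m).1 from hkl)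
  have hdAHinv : ∀ k, dblk AH⁻¹ k = (AHd k)⁻¹ := by
    intro k
    have h1 : AHd k * dblk AH⁻¹ k = 1 := by
      rw [← hdAH k, ← dblk_mul hAHblt hAHinvblt, Matrix.mul_nonsing_inv _ hdetAH,
        dblk_one]
    exact (Matrix.inv_eq_right_inv h1).symm
  -- the product A * Q
  set M : Matrix (Fin (nT+1) × Fin n) (Fin (nT+1) × Fin n) ℂ := 𝒵 * AH⁻¹ * 𝒴ᴴ with hM
  have hMblt : BLT M := (h𝒵blt.mul hAHinvblt).mul h𝒴Hblt
  have hdM : ∀ k, dblk M k = Z k * (AHd k)⁻¹ * (Y k)ᴴ := by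
    intro k
    rw [hM, dblk_mul (h𝒵blt.mul hAHinvblt) h𝒴Hblt, dblk_mul h𝒵blt hAHinvblt,
      hd𝒵, hdAHinv, hd𝒴H]
  have hAQ : A * Q = A - A * M * A + μ • (A * M) := by
    rw [hQ, Matrix.mul_add, Matrix.mul_sub, Matrix.mul_one, Matrix.mul_smul,
      ← Matrix.mul_assoc]
  have hAQblt : BLT (A * Q) := by
    rw [hAQ]
    intro k l i j hkl
    have h1 := hAblt k l i j hkl
    have h2 := ((hAblt.mul hMblt).mul hAblt) k l i j hkl
    have h3 := (hAblt.mul hMblt) k l i j hkl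
    simp [Matrix.add_apply, Matrix.sub_apply, Matrix.smul_apply, h1, h2, h3]
  refine ⟨hAHunit, fun k l hkl i j => hAQblt k l i j hkl, fun k i j => ?_⟩
  have hd : dblk (A * Q) k = Ad k * Qk k := by
    have : dblk (A * Q) k = Ad k - Ad k * (Z k * (AHd k)⁻¹ * (Y k)ᴴ) * Ad k
        + μ • (Ad k * (Z k * (AHd k)⁻¹ * (Y k)ᴴ)) := by
      rw [hAQ]
      have hADD : ∀ (P R : Matrix (Fin (nT+1) × Fin n) (Fin (nT+1) × Fin n) ℂ),
          dblk (P + R) k = dblk P k + dblk R k := fun P R => rfl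
      have hSUB : ∀ (P R : Matrix (Fin (nT+1) × Fin n) (Fin (nT+1) × Fin n) ℂ),
          dblk (P - R) k = dblk P k - dblk R k := fun P R => rfl
      have hSMUL : ∀ (P : Matrix (Fin (nT+1) × Fin n) (Fin (nT+1) × Fin n) ℂ),
          dblk (μ • P) k = μ • dblk P k := fun P => rfl
      rw [hADD, hSUB, hSMUL, dblk_mul (hAblt.mul hMblt) hAblt, dblk_mul hAblt hMblt,
        hdA, hdM]
    rw [this, hQk]
    rw [Matrix.mul_add, Matrix.mul_sub, Matrix.mul_one, Matrix.mul_smul]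
    rw [Matrix.mul_assoc (Ad k) (Z k * (AHd k)⁻¹ * (Y k)ᴴ) (Ad k)]
  exact congrFun (congrFun hd i) j
end

section
/- Suppose each coarse diagonal block A^H_{k,k} = Y_k^* A_{k,k} Z_k is invertible. Then the characteristic polynomial of the two-level matrix A Q equals the product over k = 0,…,n_T of the characteristic polynomials of the block matrices A_{k,k} Q_k; in particular, the spectrum satisfies σ(A Q) = ⋃_{k=0}^{n_T} σ(A_{k,k} Q_k). -/
set_option linter.unusedSectionVars false
set_option maxHeartbeats 1000000

open Matrix Finset

section Aux

variable {I α R : Type*} [Fintype I] [DecidableEq I] [LinearOrder α] [DecidableEq α] [CommRing R]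

private lemma sq_one' (b : I → α) (k : α) :
    (1 : Matrix I I R).toSquareBlock b k = 1 := by
  ext i j
  simp [toSquareBlock_def, one_apply, Subtype.ext_iff]

private lemma sq_sub' (M N : Matrix I I R) (b : I → α) (k : α) :
    (M - N).toSquareBlock b k = M.toSquareBlock b k - N.toSquareBlock b k := by
  ext i j; simp [toSquareBlock_def]

private lemma sq_add' (M N : Matrix I I R) (b : I → α) (k : α) :
    (M + N).toSquareBlock b k = M.toSquareBlock b k + N.toSquareBlock b k := by
  ext i j; simp [toSquareBlock_def]

private lemma sq_smul' (c : R) (M : Matrix I I R) (b : I → α) (k : α) :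
    (c • M).toSquareBlock b k = c • M.toSquareBlock b k := by
  ext i j; simp [toSquareBlock_def]

private lemma sq_mul' {M N : Matrix I I R} {b : I → α} (hM : M.BlockTriangular b)
    (hN : N.BlockTriangular b) (k : α) :
    (M * N).toSquareBlock b k = M.toSquareBlock b k * N.toSquareBlock b k := by
  ext i j
  have hi : b (i : I) = k := i.2
  have hj : b (j : I) = k := j.2
  simp only [toSquareBlock_def, of_apply, mul_apply]
  rw [show (∑ x : { a // b a = k }, M i x * N x j)
      = ∑ l ∈ Finset.univ.filter (fun l => b l = k), M i l * N l j from
    (Finset.sum_subtype _ (fun x => by simp) (fun l => M i l * N l j)).symm]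
  refine (Finset.sum_subset (Finset.filter_subset _ _) ?_).symm
  intro l _ hl
  simp only [Finset.mem_filter, Finset.mem_univ, true_and] at hl
  rcases lt_or_gt_of_ne (hl : b l ≠ k) with h | h
  · rw [hM (show b l < b (i:I) by rw [hi]; exact h), zero_mul]
  · rw [hN (show b (j:I) < b l by rw [hj]; exact h), mul_zero]

private lemma sq_inv' {M : Matrix I I R} {b : I → α} (hM : M.BlockTriangular b)
    [Invertible M] (k : α) :
    (M⁻¹).toSquareBlock b k = (M.toSquareBlock b k)⁻¹ := by
  have h1 : M.toSquareBlock b k * (M⁻¹).toSquareBlock b k = 1 := by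
    rw [← sq_mul' hM (blockTriangular_inv_of_blockTriangular hM), Matrix.mul_inv_of_invertible,
      sq_one']
  exact (inv_eq_right_inv h1).symm

private lemma spec_charpoly' (M : Matrix I I ℂ) :
    spectrum ℂ M = {x : ℂ | M.charpoly.eval x = 0} := by
  ext x
  rw [spectrum.mem_iff, Set.mem_setOf_eq]
  have hdet : M.charpoly.eval x = (algebraMap ℂ (Matrix I I ℂ) x - M).det := by
    rw [Matrix.charpoly, ← Polynomial.coe_evalRingHom, RingHom.map_det]
    congr 1
    ext i j
    by_cases h : i = j <;>
      simp [h, charmatrix_apply, Matrix.algebraMap_matrix_apply, Matrix.diagonal_apply]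
  rw [Matrix.isUnit_iff_isUnit_det, isUnit_iff_ne_zero, not_ne_iff, hdet]

/-- the fiber of the block projection over `k` is equivalent to the fiber type -/
private def fibEquiv' {K T : Type*} (k : K) :
    T ≃ {p : K × T // (OrderDual.toDual p.1 : Kᵒᵈ) = OrderDual.toDual k} where
  toFun t := ⟨(k, t), rfl⟩
  invFun p := p.1.2
  left_inv t := rfl
  right_inv p := Subtype.ext (Prod.ext (congrArg OrderDual.ofDual p.2).symm rfl)

end Aux

/-- The characteristic polynomial of the two-level matrix A Q is the product of the
    characteristic polynomials of the diagonal blocks A_{k,k} Q_k; in particular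
    σ(A Q) = ⋃_k σ(A_{k,k} Q_k). -/
theorem stmt_11 (nT n m : ℕ)
    (Ad As : Fin (nT+1) → Matrix (Fin n) (Fin n) ℂ)
    (A : Matrix (Fin (nT+1) × Fin n) (Fin (nT+1) × Fin n) ℂ)
    (hA : ∀ (k l : Fin (nT+1)) (i j : Fin n),
      A (k, i) (l, j) =
        if k = l then Ad k i j
        else if (l:ℕ) + 1 = (k:ℕ) then As k i j else 0)
    (Y Z : Fin (nT+1) → Matrix (Fin n) (Fin m) ℂ)
    (𝒴 𝒵 : Matrix (Fin (nT+1) × Fin n) (Fin (nT+1) × Fin m) ℂ)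
    (h𝒴 : ∀ (k l : Fin (nT+1)) (i : Fin n) (j : Fin m),
      𝒴 (k, i) (l, j) = if k = l then Y k i j else 0)
    (h𝒵 : ∀ (k l : Fin (nT+1)) (i : Fin n) (j : Fin m),
      𝒵 (k, i) (l, j) = if k = l then Z k i j else 0)
    (AHd : Fin (nT+1) → Matrix (Fin m) (Fin m) ℂ)
    (hAHd : ∀ k, AHd k = (Y k)ᴴ * Ad k * Z k)
    (hinv : ∀ k, IsUnit (AHd k))
    (μ : ℂ)
    (AH : Matrix (Fin (nT+1) × Fin m) (Fin (nT+1) × Fin m) ℂ)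
    (hAH : AH = 𝒴ᴴ * A * 𝒵)
    (Q : Matrix (Fin (nT+1) × Fin n) (Fin (nT+1) × Fin n) ℂ)
    (hQ : Q = 1 - 𝒵 * AH⁻¹ * 𝒴ᴴ * A + μ • (𝒵 * AH⁻¹ * 𝒴ᴴ))
    (Qk : Fin (nT+1) → Matrix (Fin n) (Fin n) ℂ)
    (hQk : ∀ k, Qk k =
      1 - Z k * (AHd k)⁻¹ * (Y k)ᴴ * Ad k + μ • (Z k * (AHd k)⁻¹ * (Y k)ᴴ)) :
    (A * Q).charpoly = ∏ k : Fin (nT+1), (Ad k * Qk k).charpoly ∧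
    spectrum ℂ (A * Q) = ⋃ k : Fin (nT+1), spectrum ℂ (Ad k * Qk k) := by
  classical
  -- the block projections
  set bn : Fin (nT+1) × Fin n → (Fin (nT+1))ᵒᵈ := fun p => OrderDual.toDual p.1 with hbn
  set bm : Fin (nT+1) × Fin m → (Fin (nT+1))ᵒᵈ := fun p => OrderDual.toDual p.1 with hbm
  -- A is block (lower) triangular
  have hAbt : A.BlockTriangular bn := by
    rintro ⟨k, i⟩ ⟨l, j⟩ h
    have hkl : k < l := h
    rw [hA, if_neg (by exact fun hh => absurd hh hkl.ne), if_neg (by omega)]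
  -- entrywise formula for AH
  have hAHe : ∀ (k l : Fin (nT+1)) (q s : Fin m), AH (k, q) (l, s)
      = ∑ i, ∑ j, (starRingEnd ℂ) (Y k i q) * A (k, i) (l, j) * Z l j s := by
    intro k l q s
    rw [hAH]
    simp only [mul_apply, Fintype.sum_prod_type, conjTranspose_apply]
    simp only [h𝒴, h𝒵, apply_ite (star : ℂ → ℂ), star_zero, ite_mul, mul_ite, zero_mul, mul_zero,
      Finset.sum_ite_irrel, Finset.sum_const_zero, Finset.sum_ite_eq, Finset.sum_ite_eq',
      Finset.mem_univ, if_true, starRingEnd_apply]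
    simp only [Finset.sum_mul]
    exact Finset.sum_comm
  -- AH is block triangular
  have hAHbt : AH.BlockTriangular bm := by
    rintro ⟨k, q⟩ ⟨l, s⟩ h
    have hkl : k < l := h
    rw [hAHe]
    refine Finset.sum_eq_zero fun i _ => Finset.sum_eq_zero fun j _ => ?_
    rw [hA, if_neg (by exact fun hh => absurd hh hkl.ne), if_neg (by omega), mul_zero, zero_mul]
  -- diagonal square blocks of AH
  have hAHsq : ∀ k : Fin (nT+1), AH.toSquareBlock bm (OrderDual.toDual k)
      = (AHd k).submatrix (fibEquiv' (T := Fin m) k).symm (fibEquiv' (T := Fin m) k).symm := by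
    intro k
    ext ⟨⟨l, q⟩, hl⟩ ⟨⟨l', s⟩, hl'⟩
    have hlk : l = k := congrArg OrderDual.ofDual hl
    have hlk' : l' = k := congrArg OrderDual.ofDual hl'
    show AH (l, q) (l', s) = AHd k q s
    rw [hlk, hlk', hAHe, hAHd]
    simp only [mul_apply, conjTranspose_apply, Finset.sum_mul, starRingEnd_apply]
    rw [Finset.sum_comm]
    refine Finset.sum_congr rfl fun i _ => Finset.sum_congr rfl fun j _ => ?_
    rw [hA, if_pos rfl]
  -- AH is invertible
  have hdet : IsUnit AH.det := by
    rw [hAHbt.det, isUnit_iff_ne_zero, Finset.prod_ne_zero_iff]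
    intro a ha
    obtain ⟨p, -, rfl⟩ := Finset.mem_image.mp ha
    obtain ⟨k, q⟩ := p
    show (AH.toSquareBlock bm (OrderDual.toDual k)).det ≠ 0
    rw [hAHsq k, Matrix.det_submatrix_equiv_self]
    rw [← isUnit_iff_ne_zero, ← Matrix.isUnit_iff_isUnit_det]
    exact hinv k
  haveI hInvAH : Invertible AH := AH.invertibleOfIsUnitDet hdet
  have hAHibt : AH⁻¹.BlockTriangular bm := blockTriangular_inv_of_blockTriangular hAHbt
  -- entries of the inverse on diagonal blocks
  have hAHi : ∀ (k : Fin (nT+1)) (q s : Fin m), AH⁻¹ (k, q) (k, s) = (AHd k)⁻¹ q s := by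
    intro k q s
    have h1 := sq_inv' hAHbt (OrderDual.toDual k)
    rw [hAHsq k, Matrix.inv_submatrix_equiv] at h1
    have h2 := congrFun (congrFun h1 (fibEquiv' (T := Fin m) k q)) (fibEquiv' (T := Fin m) k s)
    simpa [toSquareBlock_def, fibEquiv'] using h2
  -- the matrix S and its properties
  set S : Matrix (Fin (nT+1) × Fin n) (Fin (nT+1) × Fin n) ℂ := 𝒵 * AH⁻¹ * 𝒴ᴴ with hS
  have hSe : ∀ (k l : Fin (nT+1)) (i j : Fin n), S (k, i) (l, j)
      = ∑ q, ∑ s, Z k i q * AH⁻¹ (k, q) (l, s) * (starRingEnd ℂ) (Y l j s) := by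
    intro k l i j
    rw [hS]
    simp only [mul_apply, Fintype.sum_prod_type, conjTranspose_apply]
    simp only [h𝒴, h𝒵, apply_ite (star : ℂ → ℂ), star_zero, ite_mul, mul_ite, zero_mul, mul_zero,
      Finset.sum_ite_irrel, Finset.sum_const_zero, Finset.sum_ite_eq, Finset.sum_ite_eq',
      Finset.mem_univ, if_true, starRingEnd_apply]
    simp only [Finset.sum_mul]
    exact Finset.sum_comm
  have hSbt : S.BlockTriangular bn := by
    rintro ⟨k, i⟩ ⟨l, j⟩ h
    have hkl : k < l := h
    rw [hSe]
    refine Finset.sum_eq_zero fun q _ => Finset.sum_eq_zero fun s _ => ?_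
    rw [hAHibt (show bm (l, s) < bm (k, q) from hkl), mul_zero, zero_mul]
  have hSsq : ∀ k : Fin (nT+1), S.toSquareBlock bn (OrderDual.toDual k)
      = (Z k * (AHd k)⁻¹ * (Y k)ᴴ).submatrix
          (fibEquiv' (T := Fin n) k).symm (fibEquiv' (T := Fin n) k).symm := by
    intro k
    ext ⟨⟨l, i⟩, hl⟩ ⟨⟨l', j⟩, hl'⟩
    have hlk : l = k := congrArg OrderDual.ofDual hl
    have hlk' : l' = k := congrArg OrderDual.ofDual hl'
    show S (l, i) (l', j) = (Z k * (AHd k)⁻¹ * (Y k)ᴴ) i j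
    rw [hlk, hlk', hSe]
    simp only [mul_apply, conjTranspose_apply, Finset.sum_mul, starRingEnd_apply]
    rw [Finset.sum_comm]
    refine Finset.sum_congr rfl fun q _ => Finset.sum_congr rfl fun s _ => ?_
    rw [hAHi]
  -- A*Q as a combination of block triangular matrices
  have hAQ : A * Q = A - A * S * A + μ • (A * S) := by
    rw [hQ, Matrix.mul_add, Matrix.mul_sub, Matrix.mul_one, mul_smul_comm]
    simp only [hS, ← Matrix.mul_assoc]
  have hbt2 : (A * S * A).BlockTriangular bn := (hAbt.mul hSbt).mul hAbt
  have hbt3 : (μ • (A * S)).BlockTriangular bn := fun p r h => by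
    simp [Matrix.smul_apply, (hAbt.mul hSbt) h]
  have hAQbt : (A * Q).BlockTriangular bn := by
    rw [hAQ]; exact (hAbt.sub hbt2).add hbt3
  -- diagonal square block of A
  have hAsq : ∀ k : Fin (nT+1), A.toSquareBlock bn (OrderDual.toDual k)
      = (Ad k).submatrix (fibEquiv' (T := Fin n) k).symm (fibEquiv' (T := Fin n) k).symm := by
    intro k
    ext ⟨⟨l, i⟩, hl⟩ ⟨⟨l', j⟩, hl'⟩
    have hlk : l = k := congrArg OrderDual.ofDual hl
    have hlk' : l' = k := congrArg OrderDual.ofDual hl'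
    show A (l, i) (l', j) = Ad k i j
    rw [hlk, hlk', hA, if_pos rfl]
  -- diagonal square block of A*Q
  have hAQsq : ∀ k : Fin (nT+1), (A * Q).toSquareBlock bn (OrderDual.toDual k)
      = (Ad k * Qk k).submatrix
          (fibEquiv' (T := Fin n) k).symm (fibEquiv' (T := Fin n) k).symm := by
    intro k
    rw [hAQ, sq_add' _ _ bn, sq_sub' _ _ bn, sq_smul' _ _ bn,
      sq_mul' (hAbt.mul hSbt) hAbt, sq_mul' hAbt hSbt, hAsq, hSsq,
      Matrix.submatrix_mul_equiv, Matrix.submatrix_mul_equiv]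
    rw [hQk]
    have hrw : Ad k * (1 - Z k * (AHd k)⁻¹ * (Y k)ᴴ * Ad k + μ • (Z k * (AHd k)⁻¹ * (Y k)ᴴ))
        = Ad k - Ad k * (Z k * (AHd k)⁻¹ * (Y k)ᴴ) * Ad k
          + μ • (Ad k * (Z k * (AHd k)⁻¹ * (Y k)ᴴ)) := by
      simp only [mul_add, mul_sub, mul_one, mul_smul_comm, ← Matrix.mul_assoc]
    rw [hrw]
    simp [Matrix.submatrix_add, Matrix.submatrix_sub, Matrix.submatrix_smul]
  -- the characteristic polynomial identity
  have hcp : (A * Q).charpoly = ∏ k : Fin (nT+1), (Ad k * Qk k).charpoly := by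
    rcases Nat.eq_zero_or_pos n with hn | hn
    · subst hn
      haveI : IsEmpty (Fin 0) := inferInstance
      simp [Matrix.charpoly, Matrix.det_isEmpty]
    · rw [hAQbt.charpoly]
      have himg : Finset.image bn Finset.univ = Finset.univ := by
        ext a
        simp only [Finset.mem_image, Finset.mem_univ, true_and, iff_true]
        exact ⟨(OrderDual.ofDual a, ⟨0, hn⟩), rfl⟩
      rw [himg]
      rw [← Fintype.prod_equiv (OrderDual.toDual : Fin (nT+1) ≃ (Fin (nT+1))ᵒᵈ)
        (fun k => (((A * Q)).toSquareBlock bn (OrderDual.toDual k)).charpoly)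
        (fun a => (((A * Q)).toSquareBlock bn a).charpoly) (fun k => rfl)]
      refine Finset.prod_congr rfl fun k _ => ?_
      rw [hAQsq k]
      have : (Ad k * Qk k).submatrix
            (fibEquiv' (T := Fin n) k).symm (fibEquiv' (T := Fin n) k).symm
          = reindex (fibEquiv' (T := Fin n) k) (fibEquiv' (T := Fin n) k) (Ad k * Qk k) := rfl
      rw [this, Matrix.charpoly_reindex]
  refine ⟨hcp, ?_⟩
  -- the spectrum identity
  rw [spec_charpoly', hcp]
  ext x
  simp only [Set.mem_setOf_eq, Polynomial.eval_prod, Finset.prod_eq_zero_iff, Set.mem_iUnion,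
    spec_charpoly', Finset.mem_univ, true_and, Set.mem_setOf_eq]
end

section
/- Suppose the blocks are uniform, i.e., A_{k,k} = A_{1,1}, Y_k = Y_1 and Z_k = Z_1 (hence Q_k = Q_1) for all k = 1,…,n_T, and each coarse diagonal block A^H_{k,k} is invertible. Then the spectrum of the two-level matrix is determined by the first two diagonal blocks: σ(A Q) = σ(A_{0,0} Q_0) ∪ σ(A_{1,1} Q_1). -/
open Matrix Finset

namespace Stmt12Aux

variable {κ α β γ R : Type*} [CommRing R]

/-- The `(k,l)` block of a block matrix. -/
def blk (M : Matrix (κ × α) (κ × β) R) (k l : κ) : Matrix α β R :=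
  Matrix.of fun i j => M (k, i) (l, j)

@[simp] lemma blk_apply (M : Matrix (κ × α) (κ × β) R) (k l : κ) (i : α) (j : β) :
    blk M k l i j = M (k, i) (l, j) := rfl

lemma blk_add (M N : Matrix (κ × α) (κ × β) R) (k l : κ) :
    blk (M + N) k l = blk M k l + blk N k l := rfl

lemma blk_sub (M N : Matrix (κ × α) (κ × β) R) (k l : κ) :
    blk (M - N) k l = blk M k l - blk N k l := rfl

lemma blk_smul (c : R) (M : Matrix (κ × α) (κ × β) R) (k l : κ) :
    blk (c • M) k l = c • blk M k l := rfl

lemma blk_one [DecidableEq κ] [DecidableEq α] (k : κ) :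
    blk (1 : Matrix (κ × α) (κ × α) R) k k = 1 := by
  ext i j
  simp [blk, Matrix.one_apply, Prod.ext_iff]

lemma blk_one_ne [DecidableEq κ] [DecidableEq α] {k l : κ} (h : k ≠ l) :
    blk (1 : Matrix (κ × α) (κ × α) R) k l = 0 := by
  ext i j
  simp [blk, Matrix.one_apply, Prod.ext_iff, h]

lemma blk_mul [Fintype κ] [Fintype β] (M : Matrix (κ × α) (κ × β) R)
    (N : Matrix (κ × β) (κ × γ) R) (k l : κ) :
    blk (M * N) k l = ∑ r : κ, blk M k r * blk N r l := by
  ext i j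
  simp [blk, Matrix.mul_apply, Matrix.sum_apply, Fintype.sum_prod_type]

/-- Block-lower-triangular (blocks strictly above the diagonal vanish). -/
def LowTri [LT κ] (M : Matrix (κ × α) (κ × β) R) : Prop :=
  ∀ ⦃k l : κ⦄, k < l → blk M k l = 0

lemma LowTri.mul [LinearOrder κ] [Fintype κ] [Fintype β]
    {M : Matrix (κ × α) (κ × β) R} {N : Matrix (κ × β) (κ × γ) R}
    (hM : LowTri M) (hN : LowTri N) : LowTri (M * N) := by
  intro k l hkl
  rw [blk_mul]
  refine Finset.sum_eq_zero fun r _ => ?_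
  rcases lt_or_ge k r with h | h
  · rw [hM h, Matrix.zero_mul]
  · rw [hN (lt_of_le_of_lt h hkl), Matrix.mul_zero]

lemma LowTri.blk_mul_diag [LinearOrder κ] [Fintype κ] [Fintype β]
    {M : Matrix (κ × α) (κ × β) R} {N : Matrix (κ × β) (κ × γ) R}
    (hM : LowTri M) (hN : LowTri N) (k : κ) :
    blk (M * N) k k = blk M k k * blk N k k := by
  rw [blk_mul]
  refine Finset.sum_eq_single k (fun r _ hr => ?_) (by simp)
  rcases lt_or_ge k r with h | h
  · rw [hM h, Matrix.zero_mul]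
  · rw [hN (lt_of_le_of_ne h hr : r < k), Matrix.mul_zero]

lemma blk_diag_mul [DecidableEq κ] [Fintype κ] [Fintype β]
    {M : Matrix (κ × α) (κ × β) R} (hM : ∀ k l, k ≠ l → blk M k l = 0)
    (N : Matrix (κ × β) (κ × γ) R) (k l : κ) :
    blk (M * N) k l = blk M k k * blk N k l := by
  rw [blk_mul]
  refine Finset.sum_eq_single k (fun r _ hr => ?_) (by simp)
  rw [hM k r (Ne.symm hr), Matrix.zero_mul]

lemma blk_mul_diag' [DecidableEq κ] [Fintype κ] [Fintype β]
    {N : Matrix (κ × β) (κ × γ) R} (hN : ∀ k l, k ≠ l → blk N k l = 0)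
    (M : Matrix (κ × α) (κ × β) R) (k l : κ) :
    blk (M * N) k l = blk M k l * blk N l l := by
  rw [blk_mul]
  refine Finset.sum_eq_single l (fun r _ hr => ?_) (by simp)
  rw [hN r l hr, Matrix.mul_zero]

lemma LowTri.blockTriangular [Preorder κ] {M : Matrix (κ × α) (κ × α) R}
    (hM : LowTri M) : M.BlockTriangular (fun p => OrderDual.toDual p.1) := by
  intro p q h
  have := congrFun (congrFun (hM (show p.1 < q.1 from h)) p.2) q.2
  simpa using this

lemma lowTri_of_blockTriangular [Preorder κ] {M : Matrix (κ × α) (κ × α) R}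
    (hM : M.BlockTriangular (fun p : κ × α => OrderDual.toDual p.1)) : LowTri M := by
  intro k l hkl
  ext i j
  exact hM (show OrderDual.toDual l < OrderDual.toDual k from hkl)

lemma LowTri.det [LinearOrder κ] [Fintype κ] [DecidableEq κ] [Fintype α] [DecidableEq α]
    {M : Matrix (κ × α) (κ × α) R} (hM : LowTri M) :
    M.det = ∏ k : κ, (blk M k k).det := by
  rw [hM.blockTriangular.det_fintype]
  refine (Fintype.prod_equiv OrderDual.toDual _ _ fun k => ?_).symm
  let e : α ≃ { p : κ × α // (fun p : κ × α => OrderDual.toDual p.1) p = OrderDual.toDual k } :=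
    { toFun := fun i => ⟨(k, i), rfl⟩
      invFun := fun p => p.1.2
      left_inv := fun i => rfl
      right_inv := fun p => by
        ext
        · exact (show p.1.1 = k from p.2).symm
        · rfl }
  have hsub : (M.toSquareBlock (fun p : κ × α => OrderDual.toDual p.1)
      (OrderDual.toDual k)).submatrix e e = blk M k k := by
    ext i j
    simp [Matrix.submatrix_apply, Matrix.toSquareBlock_def, blk, e]
  rw [← hsub, Matrix.det_submatrix_equiv_self]

lemma mem_spectrum_iff_det {ι : Type*} [Fintype ι] [DecidableEq ι]
    (M : Matrix ι ι ℂ) (z : ℂ) :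
    z ∈ spectrum ℂ M ↔ (z • (1 : Matrix ι ι ℂ) - M).det = 0 := by
  rw [spectrum.mem_iff, Matrix.isUnit_iff_isUnit_det, isUnit_iff_ne_zero, not_ne_iff,
    Algebra.algebraMap_eq_smul_one]

end Stmt12Aux
open Stmt12Aux in
/-- With uniform blocks (A_{k,k} = A_{1,1}, Y_k = Y_1, Z_k = Z_1 for k = 1,…,n_T),
    the spectrum of the two-level matrix is determined by the first two diagonal
    blocks: σ(A Q) = σ(A_{0,0} Q_0) ∪ σ(A_{1,1} Q_1). -/
theorem stmt_12 (nT n m : ℕ) (hnT : 1 ≤ nT)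
    (Ad As : Fin (nT+1) → Matrix (Fin n) (Fin n) ℂ)
    (A : Matrix (Fin (nT+1) × Fin n) (Fin (nT+1) × Fin n) ℂ)
    (hA : ∀ (k l : Fin (nT+1)) (i j : Fin n),
      A (k, i) (l, j) =
        if k = l then Ad k i j
        else if (l:ℕ) + 1 = (k:ℕ) then As k i j else 0)
    (Y Z : Fin (nT+1) → Matrix (Fin n) (Fin m) ℂ)
    (hAdu : ∀ k : Fin (nT+1), k ≠ 0 → Ad k = Ad 1)
    (hYu : ∀ k : Fin (nT+1), k ≠ 0 → Y k = Y 1)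
    (hZu : ∀ k : Fin (nT+1), k ≠ 0 → Z k = Z 1)
    (𝒴 𝒵 : Matrix (Fin (nT+1) × Fin n) (Fin (nT+1) × Fin m) ℂ)
    (h𝒴 : ∀ (k l : Fin (nT+1)) (i : Fin n) (j : Fin m),
      𝒴 (k, i) (l, j) = if k = l then Y k i j else 0)
    (h𝒵 : ∀ (k l : Fin (nT+1)) (i : Fin n) (j : Fin m),
      𝒵 (k, i) (l, j) = if k = l then Z k i j else 0)
    (AHd : Fin (nT+1) → Matrix (Fin m) (Fin m) ℂ)
    (hAHd : ∀ k, AHd k = (Y k)ᴴ * Ad k * Z k)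
    (hinv : ∀ k, IsUnit (AHd k))
    (μ : ℂ)
    (AH : Matrix (Fin (nT+1) × Fin m) (Fin (nT+1) × Fin m) ℂ)
    (hAH : AH = 𝒴ᴴ * A * 𝒵)
    (Q : Matrix (Fin (nT+1) × Fin n) (Fin (nT+1) × Fin n) ℂ)
    (hQ : Q = 1 - 𝒵 * AH⁻¹ * 𝒴ᴴ * A + μ • (𝒵 * AH⁻¹ * 𝒴ᴴ))
    (Qk : Fin (nT+1) → Matrix (Fin n) (Fin n) ℂ)
    (hQk : ∀ k, Qk k =
      1 - Z k * (AHd k)⁻¹ * (Y k)ᴴ * Ad k + μ • (Z k * (AHd k)⁻¹ * (Y k)ᴴ)) :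
    spectrum ℂ (A * Q) = spectrum ℂ (Ad 0 * Qk 0) ∪ spectrum ℂ (Ad 1 * Qk 1) := by
  classical
  -- blocks of A
  have hAtri : LowTri A := by
    intro k l hkl
    ext i j
    have h1 : k ≠ l := ne_of_lt hkl
    have h2 : ¬((l:ℕ) + 1 = (k:ℕ)) := by
      have := Fin.lt_iff_val_lt_val.mp hkl; omega
    rw [blk_apply, hA]
    simp [h1, h2]
  have hAkk : ∀ k, blk A k k = Ad k := by
    intro k; ext i j; rw [blk_apply, hA]; simp
  -- blocks of 𝒵 and 𝒴ᴴ
  have hZd : ∀ k l : Fin (nT+1), k ≠ l → blk 𝒵 k l = 0 := by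
    intro k l h; ext i j; rw [blk_apply, h𝒵]; simp [h]
  have hZkk : ∀ k, blk 𝒵 k k = Z k := by
    intro k; ext i j; rw [blk_apply, h𝒵]; simp
  have hYHd : ∀ k l : Fin (nT+1), k ≠ l → blk 𝒴ᴴ k l = 0 := by
    intro k l h; ext i j
    rw [blk_apply, conjTranspose_apply, h𝒴]
    simp [Ne.symm h]
  have hYHkk : ∀ k, blk 𝒴ᴴ k k = (Y k)ᴴ := by
    intro k; ext i j
    rw [blk_apply, conjTranspose_apply, h𝒴, conjTranspose_apply]
    simp
  -- blocks of AH
  have hAHb : ∀ k l, blk AH k l = (Y k)ᴴ * blk A k l * Z l := by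
    intro k l
    rw [hAH, blk_mul_diag' hZd, blk_diag_mul hYHd, hYHkk, hZkk]
  have hAHtri : LowTri AH := by
    intro k l h
    rw [hAHb, hAtri h, Matrix.mul_zero, Matrix.zero_mul]
  have hAHkk : ∀ k, blk AH k k = AHd k := by
    intro k; rw [hAHb, hAkk, ← hAHd]
  -- AH is invertible
  have hdetAH : IsUnit AH.det := by
    rw [hAHtri.det, isUnit_iff_ne_zero]
    refine Finset.prod_ne_zero_iff.mpr fun k _ => ?_
    rw [hAHkk k]
    exact isUnit_iff_ne_zero.mp ((Matrix.isUnit_iff_isUnit_det _).mp (hinv k))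
  haveI : Invertible AH := AH.invertibleOfIsUnitDet hdetAH
  have hAHitri : LowTri AH⁻¹ :=
    lowTri_of_blockTriangular
      (Matrix.blockTriangular_inv_of_blockTriangular hAHtri.blockTriangular)
  have hAHikk : ∀ k, blk AH⁻¹ k k = (AHd k)⁻¹ := by
    intro k
    have h1 : AH * AH⁻¹ = 1 := Matrix.mul_inv_of_invertible AH
    have h2 : AHd k * blk AH⁻¹ k k = 1 := by
      have h3 := congrArg (fun M => blk M k k) h1
      rwa [LowTri.blk_mul_diag hAHtri hAHitri, hAHkk, blk_one] at h3
    exact (Matrix.inv_eq_right_inv h2).symm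
  -- blocks of T = 𝒵 * AH⁻¹ * 𝒴ᴴ
  have hTb : ∀ k l, blk (𝒵 * AH⁻¹ * 𝒴ᴴ) k l = Z k * blk AH⁻¹ k l * (Y l)ᴴ := by
    intro k l
    rw [blk_mul_diag' hYHd, blk_diag_mul hZd, hZkk, hYHkk]
  have hTtri : LowTri (𝒵 * AH⁻¹ * 𝒴ᴴ) := by
    intro k l h
    rw [hTb, hAHitri h, Matrix.mul_zero, Matrix.zero_mul]
  have hTkk : ∀ k, blk (𝒵 * AH⁻¹ * 𝒴ᴴ) k k = Z k * (AHd k)⁻¹ * (Y k)ᴴ := by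
    intro k; rw [hTb, hAHikk]
  -- blocks of Q
  have hQtri : LowTri Q := by
    intro k l h
    rw [hQ, blk_add, blk_sub, blk_smul, blk_one_ne (ne_of_lt h),
      (hTtri.mul hAtri) h, hTtri h]
    simp
  have hQkk : ∀ k, blk Q k k = Qk k := by
    intro k
    rw [hQ, blk_add, blk_sub, blk_smul, blk_one,
      LowTri.blk_mul_diag hTtri hAtri, hTkk, hAkk, hQk]
  -- blocks of A * Q
  have hAQtri : LowTri (A * Q) := hAtri.mul hQtri
  have hAQkk : ∀ k, blk (A * Q) k k = Ad k * Qk k := by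
    intro k; rw [LowTri.blk_mul_diag hAtri hQtri, hAkk, hQkk]
  -- uniformity of Qk
  have hQku : ∀ k : Fin (nT+1), k ≠ 0 → Qk k = Qk 1 := by
    intro k hk
    have hAH1 : AHd k = AHd 1 := by
      rw [hAHd, hAHd, hYu k hk, hZu k hk, hAdu k hk]
    rw [hQk, hQk, hYu k hk, hZu k hk, hAdu k hk, hAH1]
  -- spectra via determinants
  ext z
  simp only [Set.mem_union, mem_spectrum_iff_det]
  have hLtri : LowTri (z • (1 : Matrix (Fin (nT+1) × Fin n) (Fin (nT+1) × Fin n) ℂ) - A * Q) := by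
    intro k l h
    rw [blk_sub, blk_smul, blk_one_ne (ne_of_lt h), hAQtri h]
    simp
  have hblk : ∀ k, blk (z • (1 : Matrix (Fin (nT+1) × Fin n) (Fin (nT+1) × Fin n) ℂ) - A * Q) k k
      = z • (1 : Matrix (Fin n) (Fin n) ℂ) - Ad k * Qk k := by
    intro k; rw [blk_sub, blk_smul, blk_one, hAQkk]
  rw [hLtri.det, Finset.prod_eq_zero_iff]
  constructor
  · rintro ⟨k, -, hk⟩
    rw [hblk] at hk
    by_cases h0 : k = 0
    · left; rw [h0] at hk; exact hk
    · right; rw [hAdu k h0, hQku k h0] at hk; exact hk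
  · rintro (h | h)
    · exact ⟨0, Finset.mem_univ _, by rw [hblk]; exact h⟩
    · exact ⟨1, Finset.mem_univ _, by rw [hblk]; exact h⟩
end

section
/- Suppose each coarse diagonal block A^H_{k,k} = Y_k^* A_{k,k} Z_k is invertible. Then both A Q and A Q̃ are block lower triangular with identical diagonal blocks A_{k,k} Q_k (k = 0,…,n_T); consequently the characteristic polynomials of A Q̃ and A Q coincide and σ(A Q̃) = σ(A Q). That is, replacing the Galerkin coarse matrix A_H by its block diagonal part Ã_H in the two-level preconditioner does not change the spectrum of the preconditioned matrix. -/
open Matrix Finset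

/-- Block lower triangular with given diagonal blocks. -/
def LowBD {N a b : ℕ} (M : Matrix (Fin N × Fin a) (Fin N × Fin b) ℂ)
    (D : ∀ _ : Fin N, Matrix (Fin a) (Fin b) ℂ) : Prop :=
  (∀ (k l : Fin N), (k:ℕ) < (l:ℕ) → ∀ i j, M (k,i) (l,j) = 0) ∧
  (∀ (k : Fin N) i j, M (k,i) (k,j) = D k i j)

lemma LowBD.mul {N a b c : ℕ} {M : Matrix (Fin N × Fin a) (Fin N × Fin b) ℂ}
    {P : Matrix (Fin N × Fin b) (Fin N × Fin c) ℂ}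
    {D : ∀ _ : Fin N, Matrix (Fin a) (Fin b) ℂ} {E : ∀ _ : Fin N, Matrix (Fin b) (Fin c) ℂ}
    (hM : LowBD M D) (hP : LowBD P E) : LowBD (M * P) (fun k => D k * E k) := by
  constructor
  · intro k l hkl i j
    rw [Matrix.mul_apply, Fintype.sum_prod_type]
    apply Finset.sum_eq_zero; intro cc _
    apply Finset.sum_eq_zero; intro t _
    rcases lt_or_ge (k:ℕ) (cc:ℕ) with h | h
    · rw [hM.1 k cc h, zero_mul]
    · rw [hP.1 cc l (lt_of_le_of_lt h hkl), mul_zero]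
  · intro k i j
    rw [Matrix.mul_apply, Fintype.sum_prod_type]
    rw [Finset.sum_eq_single k]
    · show _ = (D k * E k) i j
      rw [Matrix.mul_apply]
      exact Finset.sum_congr rfl fun t _ => by rw [hM.2, hP.2]
    · intro cc _ hcc
      apply Finset.sum_eq_zero; intro t _
      rcases lt_trichotomy (cc:ℕ) (k:ℕ) with h | h | h
      · rw [hP.1 cc k h, mul_zero]
      · exact absurd (Fin.ext h) hcc
      · rw [hM.1 k cc h, zero_mul]
    · intro h; exact absurd (Finset.mem_univ k) h

lemma LowBD.one {N a : ℕ} : LowBD (1 : Matrix (Fin N × Fin a) (Fin N × Fin a) ℂ)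
    (fun _ => 1) := by
  constructor
  · intro k l hkl i j
    rw [Matrix.one_apply_ne]
    intro h; rw [Prod.mk.injEq] at h; exact absurd (h.1 ▸ rfl) (Nat.ne_of_lt hkl)
  · intro k i j
    show _ = (1 : Matrix (Fin a) (Fin a) ℂ) i j
    rcases eq_or_ne i j with h | h
    · subst h; rw [Matrix.one_apply_eq, Matrix.one_apply_eq]
    · rw [Matrix.one_apply_ne (by simp [h] : ((k,i) : Fin N × Fin a) ≠ (k,j)), Matrix.one_apply_ne h]

lemma LowBD.sub {N a b : ℕ} {M P : Matrix (Fin N × Fin a) (Fin N × Fin b) ℂ}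
    {D E : ∀ _ : Fin N, Matrix (Fin a) (Fin b) ℂ}
    (hM : LowBD M D) (hP : LowBD P E) : LowBD (M - P) (fun k => D k - E k) :=
  ⟨fun k l h i j => by rw [Matrix.sub_apply, hM.1 k l h, hP.1 k l h, sub_zero],
   fun k i j => by rw [Matrix.sub_apply, hM.2, hP.2]; rfl⟩

lemma LowBD.add {N a b : ℕ} {M P : Matrix (Fin N × Fin a) (Fin N × Fin b) ℂ}
    {D E : ∀ _ : Fin N, Matrix (Fin a) (Fin b) ℂ}
    (hM : LowBD M D) (hP : LowBD P E) : LowBD (M + P) (fun k => D k + E k) :=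
  ⟨fun k l h i j => by rw [Matrix.add_apply, hM.1 k l h, hP.1 k l h, add_zero],
   fun k i j => by rw [Matrix.add_apply, hM.2, hP.2]; rfl⟩

lemma LowBD.smul {N a b : ℕ} {M : Matrix (Fin N × Fin a) (Fin N × Fin b) ℂ}
    {D : ∀ _ : Fin N, Matrix (Fin a) (Fin b) ℂ} (μ : ℂ)
    (hM : LowBD M D) : LowBD (μ • M) (fun k => μ • D k) :=
  ⟨fun k l h i j => by rw [Matrix.smul_apply, hM.1 k l h, smul_zero],
   fun k i j => by rw [Matrix.smul_apply, hM.2]; rfl⟩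

/-- product of block-diagonal matrices is block-diagonal. -/
lemma bd_mul {N a b c : ℕ} {M : Matrix (Fin N × Fin a) (Fin N × Fin b) ℂ}
    {P : Matrix (Fin N × Fin b) (Fin N × Fin c) ℂ}
    {p : ∀ _ : Fin N, Matrix (Fin a) (Fin b) ℂ} {q : ∀ _ : Fin N, Matrix (Fin b) (Fin c) ℂ}
    (hM : ∀ k l i j, M (k,i) (l,j) = if k = l then p k i j else 0)
    (hP : ∀ k l i j, P (k,i) (l,j) = if k = l then q k i j else 0) :
    ∀ k l i j, (M * P) (k,i) (l,j) = if k = l then (p k * q k) i j else 0 := by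
  intro k l i j
  rw [Matrix.mul_apply, Fintype.sum_prod_type]
  rw [Finset.sum_eq_single k]
  · rcases eq_or_ne k l with h | h
    · subst h; simp only [if_pos rfl, Matrix.mul_apply]
      exact Finset.sum_congr rfl fun t _ => by rw [hM, hP, if_pos rfl, if_pos rfl]
    · rw [if_neg h]
      apply Finset.sum_eq_zero; intro t _
      rw [hP, if_neg h, mul_zero]
  · intro cc _ hcc
    apply Finset.sum_eq_zero; intro t _
    rw [hM, if_neg (Ne.symm hcc), zero_mul]
  · intro h; exact absurd (Finset.mem_univ k) h

open Polynomial in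
lemma eval_charpoly' {ι : Type*} [Fintype ι] [DecidableEq ι] (M : Matrix ι ι ℂ) (μ : ℂ) :
    (Matrix.charpoly M).eval μ = (algebraMap ℂ (Matrix ι ι ℂ) μ - M).det := by
  rw [Matrix.charpoly, ← Polynomial.coe_evalRingHom, RingHom.map_det]
  congr 1
  ext i j
  rcases eq_or_ne i j with h | h
  · subst h
    simp [Matrix.charmatrix_apply_eq, Matrix.algebraMap_matrix_apply]
  · simp [Matrix.charmatrix_apply_ne _ _ _ h, Matrix.algebraMap_matrix_apply, h]

lemma spectrum_eq_of_charpoly_eq {ι : Type*} [Fintype ι] [DecidableEq ι]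
    {M P : Matrix ι ι ℂ} (h : M.charpoly = P.charpoly) :
    spectrum ℂ M = spectrum ℂ P := by
  ext μ
  rw [spectrum.mem_iff, spectrum.mem_iff, Matrix.isUnit_iff_isUnit_det,
    Matrix.isUnit_iff_isUnit_det, ← eval_charpoly', ← eval_charpoly', h]
/-- Replacing the Galerkin coarse matrix A_H by its block diagonal part Ã_H in the
    two-level preconditioner changes neither the block lower triangular structure,
    nor the diagonal blocks A_{k,k} Q_k, nor the characteristic polynomial, nor the
    spectrum: σ(A Qt) = σ(A Q). -/
theorem stmt_13 (nT n m : ℕ)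
    (Ad As : Fin (nT+1) → Matrix (Fin n) (Fin n) ℂ)
    (A : Matrix (Fin (nT+1) × Fin n) (Fin (nT+1) × Fin n) ℂ)
    (hA : ∀ (k l : Fin (nT+1)) (i j : Fin n),
      A (k, i) (l, j) =
        if k = l then Ad k i j
        else if (l:ℕ) + 1 = (k:ℕ) then As k i j else 0)
    (Y Z : Fin (nT+1) → Matrix (Fin n) (Fin m) ℂ)
    (𝒴 𝒵 : Matrix (Fin (nT+1) × Fin n) (Fin (nT+1) × Fin m) ℂ)
    (h𝒴 : ∀ (k l : Fin (nT+1)) (i : Fin n) (j : Fin m),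
      𝒴 (k, i) (l, j) = if k = l then Y k i j else 0)
    (h𝒵 : ∀ (k l : Fin (nT+1)) (i : Fin n) (j : Fin m),
      𝒵 (k, i) (l, j) = if k = l then Z k i j else 0)
    (AHd : Fin (nT+1) → Matrix (Fin m) (Fin m) ℂ)
    (hAHd : ∀ k, AHd k = (Y k)ᴴ * Ad k * Z k)
    (hinv : ∀ k, IsUnit (AHd k))
    (μ : ℂ)
    (AH AHt : Matrix (Fin (nT+1) × Fin m) (Fin (nT+1) × Fin m) ℂ)
    (hAH : AH = 𝒴ᴴ * A * 𝒵)
    (hAHt : ∀ (k l : Fin (nT+1)) (i j : Fin m),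
      AHt (k, i) (l, j) = if k = l then AHd k i j else 0)
    (Q Qt : Matrix (Fin (nT+1) × Fin n) (Fin (nT+1) × Fin n) ℂ)
    (hQ : Q = 1 - 𝒵 * AH⁻¹ * 𝒴ᴴ * A + μ • (𝒵 * AH⁻¹ * 𝒴ᴴ))
    (hQt : Qt = 1 - 𝒵 * AHt⁻¹ * 𝒴ᴴ * A + μ • (𝒵 * AHt⁻¹ * 𝒴ᴴ))
    (Qk : Fin (nT+1) → Matrix (Fin n) (Fin n) ℂ)
    (hQk : ∀ k, Qk k =
      1 - Z k * (AHd k)⁻¹ * (Y k)ᴴ * Ad k + μ • (Z k * (AHd k)⁻¹ * (Y k)ᴴ)) :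
    (∀ (k l : Fin (nT+1)), (k:ℕ) < (l:ℕ) → ∀ (i j : Fin n),
        (A * Q) (k, i) (l, j) = 0 ∧ (A * Qt) (k, i) (l, j) = 0) ∧
    (∀ (k : Fin (nT+1)) (i j : Fin n),
        (A * Q) (k, i) (k, j) = (Ad k * Qk k) i j ∧
        (A * Qt) (k, i) (k, j) = (Ad k * Qk k) i j) ∧
    (A * Qt).charpoly = (A * Q).charpoly ∧
    spectrum ℂ (A * Qt) = spectrum ℂ (A * Q) := by
  -- basic structure of A, 𝒵, 𝒴ᴴ
  have hA' : LowBD A Ad := by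
    constructor
    · intro k l hkl i j
      rw [hA, if_neg (fun h => Nat.ne_of_lt hkl (congrArg Fin.val h)), if_neg (by omega)]
    · intro k i j; rw [hA, if_pos rfl]
  have hZ' : LowBD 𝒵 Z :=
    ⟨fun k l hkl i j => by
        rw [h𝒵, if_neg (fun h => Nat.ne_of_lt hkl (congrArg Fin.val h))],
     fun k i j => by rw [h𝒵, if_pos rfl]⟩
  have hYHe : ∀ (k l : Fin (nT+1)) (i : Fin m) (j : Fin n),
      𝒴ᴴ (k,i) (l,j) = if k = l then (Y k)ᴴ i j else 0 := by
    intro k l i j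
    rw [Matrix.conjTranspose_apply, h𝒴]
    rcases eq_or_ne k l with h | h
    · subst h; rw [if_pos rfl, if_pos rfl, Matrix.conjTranspose_apply]
    · rw [if_neg (Ne.symm h), if_neg h, star_zero]
  have hYH' : LowBD 𝒴ᴴ (fun k => (Y k)ᴴ) :=
    ⟨fun k l hkl i j => by
        rw [hYHe, if_neg (fun h => Nat.ne_of_lt hkl (congrArg Fin.val h))],
     fun k i j => by rw [hYHe, if_pos rfl]⟩
  -- structure of AH
  have hAH0 : LowBD AH (fun k => (Y k)ᴴ * Ad k * Z k) := by
    rw [hAH]; exact (hYH'.mul hA').mul hZ'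
  have hAH' : LowBD AH AHd :=
    ⟨hAH0.1, fun k i j => by rw [hAH0.2 k i j, hAHd]⟩
  -- AH is invertible
  have hBTAH : BlockTriangular AH (fun p : Fin (nT+1) × Fin m => OrderDual.toDual p.1) := by
    rintro ⟨k,i⟩ ⟨l,j⟩ h
    exact hAH'.1 k l (OrderDual.toDual_lt_toDual.mp h) i j
  have hsb : ∀ a : (Fin (nT+1))ᵒᵈ,
      (AH.toSquareBlock (fun p : Fin (nT+1) × Fin m => OrderDual.toDual p.1) a).det
        = (AHd (OrderDual.ofDual a)).det := by
    intro a
    let e : Fin m ≃ {p : Fin (nT+1) × Fin m // OrderDual.toDual p.1 = a} :=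
      { toFun := fun t => ⟨(OrderDual.ofDual a, t), rfl⟩
        invFun := fun p => p.1.2
        left_inv := fun t => rfl
        right_inv := fun p => by
          obtain ⟨⟨k, t⟩, hk⟩ := p
          cases hk; rfl }
    have heq : (AH.toSquareBlock (fun p : Fin (nT+1) × Fin m => OrderDual.toDual p.1) a).submatrix e e
        = AHd (OrderDual.ofDual a) := by
      ext i j
      simp only [Matrix.submatrix_apply, Matrix.toSquareBlock_def, Matrix.of_apply]
      exact hAH'.2 _ i j
    rw [← heq, Matrix.det_submatrix_equiv_self]
  have hdet : IsUnit AH.det := by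
    rw [hBTAH.det_fintype]
    refine Finset.prod_induction _ IsUnit (fun a b ha hb => ha.mul hb) isUnit_one ?_
    intro a _
    rw [hsb a]
    exact (Matrix.isUnit_iff_isUnit_det _).mp (hinv _)
  haveI : Invertible AH := AH.invertibleOfIsUnitDet hdet
  have hIlowBT := Matrix.blockTriangular_inv_of_blockTriangular hBTAH
  have hIlow : ∀ (k l : Fin (nT+1)), (k:ℕ) < (l:ℕ) → ∀ i j, AH⁻¹ (k,i) (l,j) = 0 := by
    intro k l hkl i j
    exact hIlowBT (OrderDual.toDual_lt_toDual.mpr hkl)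
  -- diagonal blocks of AH⁻¹
  let Dinv : Fin (nT+1) → Matrix (Fin m) (Fin m) ℂ :=
    fun k => Matrix.of fun i j => AH⁻¹ (k,i) (k,j)
  have hDinv : LowBD AH⁻¹ Dinv := ⟨hIlow, fun k i j => rfl⟩
  have hmulI := hDinv.mul hAH'
  rw [Matrix.nonsing_inv_mul AH hdet] at hmulI
  have hDinvEq : ∀ k, (AHd k)⁻¹ = Dinv k := by
    intro k
    apply Matrix.inv_eq_left_inv
    ext i j
    exact (hmulI.2 k i j).symm.trans (LowBD.one.2 k i j)
  have hI' : LowBD AH⁻¹ (fun k => (AHd k)⁻¹) :=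
    ⟨hIlow, fun k i j => by
      show AH⁻¹ (k,i) (k,j) = (AHd k)⁻¹ i j
      rw [hDinvEq k]; rfl⟩
  -- inverse of AHt
  let Bt : Matrix (Fin (nT+1) × Fin m) (Fin (nT+1) × Fin m) ℂ :=
    Matrix.of fun p q => if p.1 = q.1 then (AHd p.1)⁻¹ p.2 q.2 else 0
  have hBt : ∀ (k l : Fin (nT+1)) (i j : Fin m),
      Bt (k,i) (l,j) = if k = l then (AHd k)⁻¹ i j else 0 := fun _ _ _ _ => rfl
  have hBtAHt := bd_mul hBt hAHt
  have hBtmul : Bt * AHt = 1 := by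
    ext ⟨k,i⟩ ⟨l,j⟩
    rw [hBtAHt k l i j]
    rcases eq_or_ne k l with h | h
    · subst h
      rw [if_pos rfl, Matrix.nonsing_inv_mul _ ((Matrix.isUnit_iff_isUnit_det _).mp (hinv k))]
      exact (LowBD.one.2 k i j).symm
    · rw [if_neg h, Matrix.one_apply_ne (by simp [h])]
  have hAHtinv : AHt⁻¹ = Bt := Matrix.inv_eq_left_inv hBtmul
  have hIt' : LowBD AHt⁻¹ (fun k => (AHd k)⁻¹) := by
    constructor
    · intro k l hkl i j
      rw [hAHtinv]
      exact if_neg (fun h => Nat.ne_of_lt hkl (congrArg Fin.val h))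
    · intro k i j
      rw [hAHtinv]
      exact if_pos rfl
  -- structure of Q, Qt
  have hE : LowBD (𝒵 * AH⁻¹ * 𝒴ᴴ) (fun k => Z k * (AHd k)⁻¹ * (Y k)ᴴ) :=
    (hZ'.mul hI').mul hYH'
  have hEt : LowBD (𝒵 * AHt⁻¹ * 𝒴ᴴ) (fun k => Z k * (AHd k)⁻¹ * (Y k)ᴴ) :=
    (hZ'.mul hIt').mul hYH'
  have hQ0 := (LowBD.one.sub (hE.mul hA')).add (LowBD.smul μ hE)
  have hQt0 := (LowBD.one.sub (hEt.mul hA')).add (LowBD.smul μ hEt)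
  rw [← hQ] at hQ0
  rw [← hQt] at hQt0
  have hQ' : LowBD Q Qk :=
    ⟨hQ0.1, fun k i j => by rw [hQk k]; exact hQ0.2 k i j⟩
  have hQt' : LowBD Qt Qk :=
    ⟨hQt0.1, fun k i j => by rw [hQk k]; exact hQt0.2 k i j⟩
  have hAQ : LowBD (A * Q) (fun k => Ad k * Qk k) := hA'.mul hQ'
  have hAQt : LowBD (A * Qt) (fun k => Ad k * Qk k) := hA'.mul hQt'
  -- charpoly
  have hBT1 : BlockTriangular (A * Q) (fun p : Fin (nT+1) × Fin n => OrderDual.toDual p.1) := by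
    rintro ⟨k,i⟩ ⟨l,j⟩ h
    exact hAQ.1 k l (OrderDual.toDual_lt_toDual.mp h) i j
  have hBT2 : BlockTriangular (A * Qt) (fun p : Fin (nT+1) × Fin n => OrderDual.toDual p.1) := by
    rintro ⟨k,i⟩ ⟨l,j⟩ h
    exact hAQt.1 k l (OrderDual.toDual_lt_toDual.mp h) i j
  have hcp : (A * Qt).charpoly = (A * Q).charpoly := by
    rw [hBT2.charpoly, hBT1.charpoly]
    refine Finset.prod_congr rfl fun a _ => ?_
    congr 1
    ext ⟨⟨k,i⟩,hk⟩ ⟨⟨l,j⟩,hl⟩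
    simp only at hk hl
    have hkl : k = l := OrderDual.toDual_inj.mp (hk.trans hl.symm)
    subst hkl
    simp only [Matrix.toSquareBlock_def, Matrix.of_apply]
    exact (hAQt.2 k i j).trans (hAQ.2 k i j).symm
  exact ⟨fun k l hkl i j => ⟨hAQ.1 k l hkl i j, hAQt.1 k l hkl i j⟩,
    fun k i j => ⟨hAQ.2 k i j, hAQt.2 k i j⟩,
    hcp, spectrum_eq_of_charpoly_eq hcp⟩
end

section
/- Under the stated biorthogonality assumptions, the coarse matrix A_H = Y^* A Z equals diag(λ_1,…,λ_r) and is invertible, and the shifted deflation preconditioner Q satisfies A Q z_i = μ z_i for i = 1,…,r and A Q z_j = λ_j z_j for j = r+1,…,N. Hence the spectrum of A Q is {μ} ∪ {λ_{r+1},…,λ_N}: the r deflated eigenvalues of A are shifted to μ while the remaining N − r eigenvalues are untouched. -/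
/-!
Biorthogonality gives `Yᴴ Z = 1`, and the eigenvector equations give `A Z = Z D` with
`D = diag(λ_1, …, λ_r)`; hence `A_H = Yᴴ A Z = D`. Expanding `Q` then yields
`A Q Z = A Z - A Z D⁻¹ (Yᴴ A Z) + μ A Z D⁻¹ (Yᴴ Z) = μ Z`, while each `z_j` with `j > r`
is killed by `Yᴴ`, and so is `A z_j = λ_j z_j`, whence `Q z_j = z_j`. So the basis `z`
diagonalises `A Q`, and the spectrum of `A Q` is the set of its diagonal entries.
-/

open Matrix

namespace Matrix

section Deflation

variable {R : Type*} [CommRing R] {n m : Type*} [Fintype n] [Fintype m] [DecidableEq n]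
  [DecidableEq m]

noncomputable def shiftedDeflation (A : Matrix n n R) (Z : Matrix n m R) (W : Matrix m n R)
    (μ : R) : Matrix n n R :=
  1 - Z * (W * A * Z)⁻¹ * W * A + μ • (Z * (W * A * Z)⁻¹ * W)

variable {A : Matrix n n R} {Z : Matrix n m R} {W : Matrix m n R} {D : Matrix m m R}

omit [DecidableEq n] in
theorem mul_mul_eq_of_mul_eq_mul (hWZ : W * Z = 1) (hAZ : A * Z = Z * D) : W * A * Z = D := by
  rw [Matrix.mul_assoc, hAZ, ← Matrix.mul_assoc, hWZ, Matrix.one_mul]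

theorem mul_shiftedDeflation_mul_eq_smul (μ : R) (hWZ : W * Z = 1) (hAZ : A * Z = Z * D)
    (hD : IsUnit D) : A * shiftedDeflation A Z W μ * Z = μ • Z := by
  have hAZD : A * Z * D⁻¹ = Z := by
    rw [hAZ, mul_nonsing_inv_cancel_right _ _ ((isUnit_iff_isUnit_det D).mp hD)]
  rw [shiftedDeflation, mul_mul_eq_of_mul_eq_mul hWZ hAZ]
  calc A * (1 - Z * D⁻¹ * W * A + μ • (Z * D⁻¹ * W)) * Z
      = A * Z - A * Z * D⁻¹ * (W * A * Z) + μ • (A * Z * D⁻¹ * (W * Z)) := by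
        simp only [Matrix.mul_add, Matrix.mul_sub, Matrix.add_mul, Matrix.sub_mul,
          Matrix.mul_smul, Matrix.smul_mul, Matrix.mul_one, Matrix.mul_assoc]
    _ = μ • Z := by
        rw [mul_mul_eq_of_mul_eq_mul hWZ hAZ, hAZD, hWZ, hAZ, Matrix.mul_one, sub_self, zero_add]

theorem mul_shiftedDeflation_mulVec_col (μ : R) (hWZ : W * Z = 1) (hAZ : A * Z = Z * D)
    (hD : IsUnit D) (i : m) : (A * shiftedDeflation A Z W μ) *ᵥ Z.col i = μ • Z.col i := by
  rw [← mulVec_single_one, mulVec_mulVec, mul_shiftedDeflation_mul_eq_smul μ hWZ hAZ hD,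
    smul_mulVec]

theorem mul_shiftedDeflation_mulVec_of_mulVec_eq_zero (μ : R) {v : n → R} {c : R}
    (hAv : A *ᵥ v = c • v) (hWv : W *ᵥ v = 0) :
    (A * shiftedDeflation A Z W μ) *ᵥ v = c • v := by
  have hWAv : W *ᵥ (A *ᵥ v) = 0 := by rw [hAv, mulVec_smul, hWv, smul_zero]
  rw [← mulVec_mulVec, ← hAv]
  simp only [shiftedDeflation, add_mulVec, sub_mulVec, one_mulVec, smul_mulVec, ← mulVec_mulVec,
    hWAv, hWv, mulVec_zero, smul_zero, sub_zero, add_zero]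

end Deflation

section Eigenbasis

variable {K : Type*} [Field K] {n m : Type*} [Fintype n]

theorem mul_transpose_of_eq_transpose_of_mul_diagonal [Fintype m] [DecidableEq m]
    {M : Matrix n n K} {v : m → n → K} {d : m → K} (hv : ∀ i, M *ᵥ v i = d i • v i) :
    M * (of v)ᵀ = (of v)ᵀ * diagonal d := by
  ext k i
  rw [mul_diagonal]
  simpa [mul_apply, mulVec, dotProduct, mul_comm] using congrFun (hv i) k

theorem spectrum_eq_range_of_mulVec_eq_smul [DecidableEq n] {M : Matrix n n K}
    {z : n → n → K} {d : n → K} (hz : LinearIndependent K z)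
    (hM : ∀ j, M *ᵥ z j = d j • z j) : spectrum K M = Set.range d := by
  obtain ⟨P, hP⟩ : IsUnit (of z)ᵀ := linearIndependent_cols_iff_isUnit.mp hz
  have hconj : M = P * diagonal d * P⁻¹ := by
    rw [hP, ← mul_transpose_of_eq_transpose_of_mul_diagonal hM, ← hP, Matrix.mul_assoc]
    simp
  rw [hconj, spectrum.units_conjugate, spectrum_diagonal]

end Eigenbasis

end Matrix

theorem Fin.range_ite_val_lt {α : Type*} {r N : ℕ} (hr : 1 ≤ r) (hrN : r ≤ N) (μ : α)
    (f : Fin N → α) :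
    Set.range (fun j : Fin N => if (j : ℕ) < r then μ else f j) =
      {μ} ∪ {x | ∃ j : Fin N, r ≤ (j : ℕ) ∧ f j = x} := by
  ext x
  simp only [Set.mem_range, Set.mem_union, Set.mem_singleton_iff, Set.mem_ofPred_eq]
  constructor
  · rintro ⟨j, rfl⟩
    by_cases hj : (j : ℕ) < r
    · exact .inl (if_pos hj)
    · exact .inr ⟨j, not_lt.mp hj, (if_neg hj).symm⟩
  · rintro (rfl | ⟨j, hj, rfl⟩)
    · exact ⟨⟨0, by omega⟩, if_pos hr⟩
    · exact ⟨j, if_neg (not_lt.mpr hj)⟩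

/-- Shifted eigenvector deflation: A_H = diag(λ_1,…,λ_r) is invertible, A Q shifts
    the r deflated eigenvalues to μ and leaves the remaining ones untouched, so that
    σ(A Q) = {μ} ∪ {λ_{r+1},…,λ_N}. -/
theorem stmt_14 (N r : ℕ) (hr1 : 1 ≤ r) (hrN : r < N)
    (A : Matrix (Fin N) (Fin N) ℂ)
    (z : Fin N → (Fin N → ℂ)) (lam : Fin N → ℂ)
    (heig : ∀ j, A *ᵥ z j = lam j • z j)
    (hbasis : LinearIndependent ℂ z)
    (hne : ∀ i : Fin N, (i:ℕ) < r → lam i ≠ 0)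
    (y : Fin r → (Fin N → ℂ))
    (hbi : ∀ (i : Fin r) (j : Fin N),
      star (y i) ⬝ᵥ z j = if (i:ℕ) = (j:ℕ) then 1 else 0)
    (Z Y : Matrix (Fin N) (Fin r) ℂ)
    (hZ : ∀ (k : Fin N) (i : Fin r), Z k i = z (Fin.castLE (le_of_lt hrN) i) k)
    (hY : ∀ (k : Fin N) (i : Fin r), Y k i = y i k)
    (AH : Matrix (Fin r) (Fin r) ℂ) (hAH : AH = Yᴴ * A * Z)
    (μ : ℂ)
    (Q : Matrix (Fin N) (Fin N) ℂ)
    (hQ : Q = 1 - Z * AH⁻¹ * Yᴴ * A + μ • (Z * AH⁻¹ * Yᴴ)) :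
    AH = Matrix.diagonal (fun i : Fin r => lam (Fin.castLE (le_of_lt hrN) i)) ∧
    IsUnit AH ∧
    (∀ i : Fin N, (i:ℕ) < r → (A * Q) *ᵥ z i = μ • z i) ∧
    (∀ j : Fin N, r ≤ (j:ℕ) → (A * Q) *ᵥ z j = lam j • z j) ∧
    spectrum ℂ (A * Q) = {μ} ∪ {x : ℂ | ∃ j : Fin N, r ≤ (j:ℕ) ∧ lam j = x} := by
  set e : Fin r → Fin N := Fin.castLE hrN.le
  have hZ' : Z = (of fun i => z (e i))ᵀ := by ext k i; exact hZ k i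
  have hYz : ∀ j, Yᴴ *ᵥ z j = fun i : Fin r => if (i : ℕ) = j then 1 else 0 := by
    obtain rfl : Y = (of y)ᵀ := by ext k i; exact hY k i
    exact fun j => funext fun i => hbi i j
  have hYZ : Yᴴ * Z = 1 := by
    ext i i'
    rw [hZ']
    change (Yᴴ *ᵥ z (e i')) i = (1 : Matrix (Fin r) (Fin r) ℂ) i i'
    simp [hYz, one_apply, Fin.ext_iff, e]
  have hAZ : A * Z = Z * diagonal (lam ∘ e) :=
    hZ' ▸ mul_transpose_of_eq_transpose_of_mul_diagonal fun i => heig (e i)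
  have hAHd : AH = diagonal (lam ∘ e) := hAH ▸ mul_mul_eq_of_mul_eq_mul hYZ hAZ
  have hD : IsUnit (diagonal (lam ∘ e)) :=
    isUnit_diagonal.mpr (Pi.isUnit_iff.mpr fun i => (hne (e i) i.isLt).isUnit)
  obtain rfl : Q = shiftedDeflation A Z Yᴴ μ := by rw [hQ, hAH]; rfl
  have hlo : ∀ i : Fin N, (i : ℕ) < r →
      (A * shiftedDeflation A Z Yᴴ μ) *ᵥ z i = μ • z i :=
    fun i hi => by
      have hcol : z i = Z.col ⟨i, hi⟩ := by rw [hZ']; rfl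
      rw [hcol]
      exact mul_shiftedDeflation_mulVec_col μ hYZ hAZ hD _
  have hhi : ∀ j : Fin N, r ≤ (j : ℕ) →
      (A * shiftedDeflation A Z Yᴴ μ) *ᵥ z j = lam j • z j := fun j hj =>
    mul_shiftedDeflation_mulVec_of_mulVec_eq_zero μ (heig j)
      ((hYz j).trans (funext fun i => if_neg (by omega)))
  refine ⟨hAHd, hAHd ▸ hD, hlo, hhi, ?_⟩
  rw [spectrum_eq_range_of_mulVec_eq_smul hbasis
    (d := fun j : Fin N => if (j : ℕ) < r then μ else lam j)
    fun j => by split_ifs with h; exacts [hlo j h, hhi j (not_lt.mp h)]]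
  exact Fin.range_ite_val_lt hr1 hrN.le μ lam
end
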